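/- arXiv:2508.15779 — 6 statements merged into one kernel-verified Lean document; each statement's English description precedes it below -/
import Mathlib

section
/- For all positive integers n and k, the number of 2×n weakly increasing matrices with entries in {1,…,k} satisfies k · |𝔐_{n,k}| = C(n+k−1, k−1) · C(n+k, k−1), where C denotes the binomial coefficient. -/
def MSet (n s t : ℕ) : Set (Fin n → ℕ × ℕ) :=
  {p | (∀ j, 1 ≤ (p j).1) ∧ (∀ j, (p j).1 ≤ (p j).2) ∧
       (∀ j j', j ≤ j' → (p j).1 ≤ (p j').1) ∧
       (∀ j j', j ≤ j' → (p j).2 ≤ (p j').2) ∧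
       (∀ j, (p j).1 ≤ s) ∧ (∀ j, (p j).2 ≤ t)}

lemma MSet_finite (n s t : ℕ) : (MSet n s t).Finite := by
  have h : MSet n s t ⊆ Set.univ.pi (fun _ : Fin n => (Set.Iic t ×ˢ Set.Iic t : Set (ℕ × ℕ))) := by
    rintro p ⟨h1, h2, h3, h4, h5, h6⟩ j _
    exact ⟨le_trans (h2 j) (h6 j), h6 j⟩
  exact Set.Finite.subset (Set.Finite.pi (fun _ => (Set.finite_Iic t).prod (Set.finite_Iic t))) h

instance (n s t : ℕ) : Finite (MSet n s t) := (MSet_finite n s t).to_subtype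

noncomputable def cnt (n s t : ℕ) : ℕ := Nat.card (MSet n s t)

lemma cnt_zero (s t : ℕ) : cnt 0 s t = 1 := by
  have : Nonempty (MSet 0 s t) := ⟨⟨(fun j => j.elim0), by
    refine ⟨?_, ?_, ?_, ?_, ?_, ?_⟩ <;> intro j <;> exact j.elim0⟩⟩
  have : Subsingleton (MSet 0 s t) := ⟨by
    rintro ⟨p, _⟩ ⟨q, _⟩
    exact Subtype.ext (funext fun j => j.elim0)⟩
  exact Nat.card_unique

def SF (s t : ℕ) : Finset (ℕ × ℕ) :=
  ((Finset.Icc 1 t) ×ˢ (Finset.Icc 1 t)).filter fun c => c.1 ≤ c.2 ∧ c.1 ≤ s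

lemma mem_SF {s t : ℕ} {c : ℕ × ℕ} :
    c ∈ SF s t ↔ 1 ≤ c.1 ∧ c.1 ≤ c.2 ∧ c.1 ≤ s ∧ c.2 ≤ t := by
  simp only [SF, Finset.mem_filter, Finset.mem_product, Finset.mem_Icc]
  omega

lemma snoc_mem {n s t : ℕ} {q : Fin n → ℕ × ℕ} {c : ℕ × ℕ}
    (hq : q ∈ MSet n c.1 c.2) (hc1 : 1 ≤ c.1) (hc2 : c.1 ≤ c.2) (hc3 : c.1 ≤ s)
    (hc4 : c.2 ≤ t) : Fin.snoc q c ∈ MSet (n+1) s t := by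
  obtain ⟨h1, h2, h3, h4, h5, h6⟩ := hq
  refine ⟨?_, ?_, ?_, ?_, ?_, ?_⟩
  · intro j
    refine Fin.lastCases ?_ (fun i => ?_) j
    · rw [Fin.snoc_last]; exact hc1
    · rw [Fin.snoc_castSucc]; exact h1 i
  · intro j
    refine Fin.lastCases ?_ (fun i => ?_) j
    · rw [Fin.snoc_last]; exact hc2
    · rw [Fin.snoc_castSucc]; exact h2 i
  · intro j j'
    refine Fin.lastCases ?_ (fun i' => ?_) j' <;> refine Fin.lastCases ?_ (fun i => ?_) j <;>
      intro hj
    · exact le_rfl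
    · rw [Fin.snoc_castSucc, Fin.snoc_last]; exact h5 i
    · exact absurd hj (Fin.castSucc_lt_last i').not_ge
    · rw [Fin.snoc_castSucc, Fin.snoc_castSucc]
      exact h3 i i' (Fin.castSucc_le_castSucc_iff.mp hj)
  · intro j j'
    refine Fin.lastCases ?_ (fun i' => ?_) j' <;> refine Fin.lastCases ?_ (fun i => ?_) j <;>
      intro hj
    · exact le_rfl
    · rw [Fin.snoc_castSucc, Fin.snoc_last]; exact h6 i
    · exact absurd hj (Fin.castSucc_lt_last i').not_ge
    · rw [Fin.snoc_castSucc, Fin.snoc_castSucc]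
      exact h4 i i' (Fin.castSucc_le_castSucc_iff.mp hj)
  · intro j
    refine Fin.lastCases ?_ (fun i => ?_) j
    · rw [Fin.snoc_last]; exact hc3
    · rw [Fin.snoc_castSucc]; exact le_trans (h5 i) hc3
  · intro j
    refine Fin.lastCases ?_ (fun i => ?_) j
    · rw [Fin.snoc_last]; exact hc4
    · rw [Fin.snoc_castSucc]; exact le_trans (h6 i) hc4

lemma cnt_succ (n s t : ℕ) : cnt (n+1) s t = ∑ c ∈ SF s t, cnt n c.1 c.2 := by
  classical
  have e : MSet (n+1) s t ≃ Σ c : {c : ℕ × ℕ // c ∈ SF s t}, MSet n c.1.1 c.1.2 := by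
    refine
      { toFun := fun p =>
          ⟨⟨p.1 (Fin.last n), mem_SF.mpr ⟨p.2.1 _, p.2.2.1 _, p.2.2.2.2.2.1 _, p.2.2.2.2.2.2 _⟩⟩,
            ⟨Fin.init p.1, ?_⟩⟩
        invFun := fun x => ⟨Fin.snoc x.2.1 x.1.1,
          by
            obtain ⟨hc1, hc2, hc3, hc4⟩ := mem_SF.mp x.1.2
            exact snoc_mem x.2.2 hc1 hc2 hc3 hc4⟩
        left_inv := ?_, right_inv := ?_ }
    · obtain ⟨h1, h2, h3, h4, h5, h6⟩ := p.2
      exact ⟨fun j => h1 _, fun j => h2 _,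
        fun j j' hj => h3 _ _ (Fin.castSucc_le_castSucc_iff.mpr hj),
        fun j j' hj => h4 _ _ (Fin.castSucc_le_castSucc_iff.mpr hj),
        fun j => h3 _ _ (Fin.le_last _), fun j => h4 _ _ (Fin.le_last _)⟩
    · intro p
      exact Subtype.ext (Fin.snoc_init_self p.1)
    · rintro ⟨⟨c, hc⟩, ⟨q, hq⟩⟩
      have h1 : (Fin.snoc q c : Fin (n+1) → ℕ × ℕ) (Fin.last n) = c := Fin.snoc_last _ _
      have h2 : Fin.init (Fin.snoc q c : Fin (n+1) → ℕ × ℕ) = q := Fin.init_snoc _ _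
      refine Sigma.ext (Subtype.ext h1) ((Subtype.heq_iff_coe_eq ?_).mpr ?_)
      · intro x
        show x ∈ MSet n ((Fin.snoc q c : Fin (n+1) → ℕ × ℕ) (Fin.last n)).1
            ((Fin.snoc q c : Fin (n+1) → ℕ × ℕ) (Fin.last n)).2 ↔ x ∈ MSet n c.1 c.2
        rw [h1]
      · exact h2
  rw [cnt, Nat.card_congr e]
  haveI : ∀ c : {c : ℕ × ℕ // c ∈ SF s t}, Fintype (MSet n c.1.1 c.1.2) :=
    fun c => Fintype.ofFinite _
  rw [Nat.card_eq_fintype_card, Fintype.card_sigma,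
    ← Finset.sum_coe_sort (SF s t) (fun c => cnt n c.1 c.2)]
  exact Finset.sum_congr rfl fun c _ => (Nat.card_eq_fintype_card).symm


/-- closed form for the count `cnt n s t` (valid when `s ≤ t`). -/
def Jf : ℕ → ℕ → ℕ → ℤ
  | 0, _, _ => 1
  | (m+1), s, t => ((m+s).choose (m+1) : ℤ) * (m+t).choose (m+1)
      - ((m+s).choose (m+2) : ℤ) * (m+t).choose m

/-- closed form for `∑ s' ∈ Icc 1 s, Jf m s' u`. -/
def Tf : ℕ → ℕ → ℕ → ℤ
  | 0, s, _ => (s : ℤ)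
  | (m+1), s, u => ((m+1+s).choose (m+2) : ℤ) * (m+u).choose (m+1)
      - ((m+1+s).choose (m+3) : ℤ) * (m+u).choose m

lemma stepT (n s u : ℕ) : Tf n (s+1) u = Tf n s u + Jf n (s+1) u := by
  cases n with
  | zero => simp only [Tf, Jf]; push_cast; ring
  | succ m =>
    show ((m+1+(s+1)).choose (m+2) : ℤ) * (m+u).choose (m+1)
        - ((m+1+(s+1)).choose (m+3) : ℤ) * (m+u).choose m
      = (((m+1+s).choose (m+2) : ℤ) * (m+u).choose (m+1)
        - ((m+1+s).choose (m+3) : ℤ) * (m+u).choose m)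
      + (((m+(s+1)).choose (m+1) : ℤ) * (m+u).choose (m+1)
        - ((m+(s+1)).choose (m+2) : ℤ) * (m+u).choose m)
    have e1 : m+1+(s+1) = (m+1+s)+1 := by omega
    have e2 : m+(s+1) = m+1+s := by omega
    rw [e1, e2, show (m+1+s+1).choose (m+2) = (m+1+s).choose (m+1) + (m+1+s).choose (m+2) from
        Nat.choose_succ_succ _ _,
      show (m+1+s+1).choose (m+3) = (m+1+s).choose (m+2) + (m+1+s).choose (m+3) from
        Nat.choose_succ_succ _ _]
    push_cast; ring

lemma sum_J (n s u : ℕ) : ∑ s' ∈ Finset.Icc 1 s, Jf n s' u = Tf n s u := by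
  induction s with
  | zero =>
    cases n with
    | zero => simp [Tf]
    | succ m =>
      show (0:ℤ) = Tf (m+1) 0 u
      simp only [Tf]
      rw [show (m+1+0).choose (m+2) = 0 from Nat.choose_eq_zero_of_lt (by omega),
        show (m+1+0).choose (m+3) = 0 from Nat.choose_eq_zero_of_lt (by omega)]
      simp
  | succ s ih =>
    rw [Finset.sum_Icc_succ_top (by omega), ih, stepT]

lemma stepJ (n s t : ℕ) : Jf (n+1) s (t+1) = Jf (n+1) s t + Tf n s (t+1) := by
  cases n with
  | zero =>
    show ((0+s).choose 1 : ℤ) * (0+(t+1)).choose 1 - ((0+s).choose 2 : ℤ) * (0+(t+1)).choose 0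
      = (((0+s).choose 1 : ℤ) * (0+t).choose 1 - ((0+s).choose 2 : ℤ) * (0+t).choose 0)
        + (s : ℤ)
    simp only [Nat.zero_add, Nat.choose_one_right, Nat.choose_zero_right]
    push_cast; ring
  | succ m =>
    show ((m+1+s).choose (m+2) : ℤ) * (m+1+(t+1)).choose (m+2)
        - ((m+1+s).choose (m+3) : ℤ) * (m+1+(t+1)).choose (m+1)
      = (((m+1+s).choose (m+2) : ℤ) * (m+1+t).choose (m+2)
        - ((m+1+s).choose (m+3) : ℤ) * (m+1+t).choose (m+1))
      + (((m+1+s).choose (m+2) : ℤ) * (m+(t+1)).choose (m+1)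
        - ((m+1+s).choose (m+3) : ℤ) * (m+(t+1)).choose m)
    have e1 : m+1+(t+1) = (m+1+t)+1 := by omega
    have e2 : m+(t+1) = m+1+t := by omega
    rw [e1, e2, show (m+1+t+1).choose (m+2) = (m+1+t).choose (m+1) + (m+1+t).choose (m+2) from
        Nat.choose_succ_succ _ _,
      show (m+1+t+1).choose (m+1) = (m+1+t).choose m + (m+1+t).choose (m+1) from
        Nat.choose_succ_succ _ _]
    push_cast; ring

lemma diagJ (n s : ℕ) : Jf (n+1) (s+1) (s+1) = Jf (n+1) s s + Tf n (s+1) (s+1) := by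
  cases n with
  | zero =>
    show ((0+(s+1)).choose 1 : ℤ) * (0+(s+1)).choose 1 - ((0+(s+1)).choose 2 : ℤ) * (0+(s+1)).choose 0
      = (((0+s).choose 1 : ℤ) * (0+s).choose 1 - ((0+s).choose 2 : ℤ) * (0+s).choose 0)
        + ((s:ℤ)+1)
    simp only [Nat.zero_add, Nat.choose_one_right, Nat.choose_zero_right]
    rw [show (s+1).choose 2 = s.choose 1 + s.choose 2 from Nat.choose_succ_succ _ _,
      Nat.choose_one_right]
    push_cast; ring
  | succ m =>
    show ((m+1+(s+1)).choose (m+2) : ℤ) * (m+1+(s+1)).choose (m+2)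
        - ((m+1+(s+1)).choose (m+3) : ℤ) * (m+1+(s+1)).choose (m+1)
      = (((m+1+s).choose (m+2) : ℤ) * (m+1+s).choose (m+2)
        - ((m+1+s).choose (m+3) : ℤ) * (m+1+s).choose (m+1))
      + (((m+1+(s+1)).choose (m+2) : ℤ) * (m+(s+1)).choose (m+1)
        - ((m+1+(s+1)).choose (m+3) : ℤ) * (m+(s+1)).choose m)
    have e1 : m+1+(s+1) = (m+1+s)+1 := by omega
    have e2 : m+(s+1) = m+1+s := by omega
    rw [e1, e2,
      show (m+1+s+1).choose (m+2) = (m+1+s).choose (m+1) + (m+1+s).choose (m+2) from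
        Nat.choose_succ_succ _ _,
      show (m+1+s+1).choose (m+3) = (m+1+s).choose (m+2) + (m+1+s).choose (m+3) from
        Nat.choose_succ_succ _ _,
      show (m+1+s+1).choose (m+1) = (m+1+s).choose m + (m+1+s).choose (m+1) from
        Nat.choose_succ_succ _ _]
    push_cast; ring

lemma diag_sum (n s : ℕ) : ∑ u ∈ Finset.Icc 1 s, Tf n u u = Jf (n+1) s s := by
  induction s with
  | zero =>
    cases n with
    | zero => simp [Jf]
    | succ m =>
      show (0:ℤ) = Jf (m+2) 0 0
      simp only [Jf]
      rw [show (m+1+0).choose (m+2) = 0 from Nat.choose_eq_zero_of_lt (by omega),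
        show (m+1+0).choose (m+3) = 0 from Nat.choose_eq_zero_of_lt (by omega)]
      simp
  | succ s ih =>
    rw [Finset.sum_Icc_succ_top (by omega), ih, diagJ]

lemma gen_sum (n s d : ℕ) :
    ∑ t' ∈ Finset.Icc 1 (s+d), Tf n (min s t') t' = Jf (n+1) s (s+d) := by
  induction d with
  | zero =>
    rw [Nat.add_zero, ← diag_sum n s]
    refine Finset.sum_congr rfl fun t' ht' => ?_
    rw [min_eq_right (Finset.mem_Icc.mp ht').2]
  | succ d ih =>
    rw [show s + (d+1) = (s+d)+1 from rfl, Finset.sum_Icc_succ_top (by omega),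
      min_eq_left (by omega), ih, stepJ]

lemma SF_sum (s t : ℕ) (f : ℕ → ℕ → ℤ) :
    ∑ c ∈ SF s t, f c.1 c.2
      = ∑ t' ∈ Finset.Icc 1 t, ∑ s' ∈ Finset.Icc 1 (min s t'), f s' t' := by
  classical
  have hSF : SF s t = (Finset.Icc 1 t).biUnion
      (fun t' => (Finset.Icc 1 (min s t')).image (fun s' => (s', t'))) := by
    ext c
    simp only [mem_SF, Finset.mem_biUnion, Finset.mem_image, Finset.mem_Icc, Prod.ext_iff]
    constructor
    · rintro ⟨h1, h2, h3, h4⟩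
      exact ⟨c.2, ⟨le_trans h1 h2, h4⟩, c.1, ⟨h1, le_min h3 h2⟩, rfl, rfl⟩
    · rintro ⟨t', ht', s', hs', h1, h2⟩
      omega
  rw [hSF, Finset.sum_biUnion]
  · refine Finset.sum_congr rfl fun t' _ => ?_
    rw [Finset.sum_image]
    intro a _ b _ h
    exact (Prod.ext_iff.mp h).1
  · intro t1 h1 t2 h2 hne
    refine Finset.disjoint_left.mpr fun c hc1 hc2 => ?_
    simp only [Finset.mem_image, Finset.mem_Icc] at hc1 hc2
    obtain ⟨a, _, rfl⟩ := hc1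
    obtain ⟨b, _, hb⟩ := hc2
    exact hne ((Prod.ext_iff.mp hb.symm).2)

lemma cnt_eq_J : ∀ n s t : ℕ, s ≤ t → (cnt n s t : ℤ) = Jf n s t := by
  intro n
  induction n with
  | zero => intro s t _; rw [cnt_zero]; rfl
  | succ n ih =>
    intro s t hst
    obtain ⟨d, rfl⟩ : ∃ d, t = s + d := ⟨t - s, by omega⟩
    rw [cnt_succ]
    push_cast
    calc ∑ c ∈ SF s (s+d), (cnt n c.1 c.2 : ℤ)
        = ∑ c ∈ SF s (s+d), Jf n c.1 c.2 :=
          Finset.sum_congr rfl fun c hc => ih c.1 c.2 (mem_SF.mp hc).2.1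
      _ = ∑ t' ∈ Finset.Icc 1 (s+d), ∑ s' ∈ Finset.Icc 1 (min s t'), Jf n s' t' :=
          SF_sum s (s+d) _
      _ = ∑ t' ∈ Finset.Icc 1 (s+d), Tf n (min s t') t' :=
          Finset.sum_congr rfl fun t' _ => sum_J n (min s t') t'
      _ = Jf (n+1) s (s+d) := gen_sum n s d

/-- The set of `2 × n` weakly increasing matrices with entries in `{1, …, k}`:
entries increase weakly along each row and down each column. -/
def WeaklyIncreasingMatrices (n k : ℕ) : Set (Fin 2 → Fin n → ℕ) :=
  {M | (∀ i j, 1 ≤ M i j ∧ M i j ≤ k) ∧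
       (∀ (i i' : Fin 2) (j j' : Fin n), i ≤ i' → j ≤ j' → M i j ≤ M i' j')}

lemma WIM_ncard (n k : ℕ) : (WeaklyIncreasingMatrices n k).ncard = cnt n k k := by
  classical
  rw [← Nat.card_coe_set_eq, cnt]
  refine Nat.card_congr ?_
  have fin2 : ∀ i : Fin 2, i = 0 ∨ i = 1 := by decide
  refine
    { toFun := fun M => ⟨fun j => (M.1 0 j, M.1 1 j), ?_⟩
      invFun := fun p => ⟨fun i j => if i = 0 then (p.1 j).1 else (p.1 j).2, ?_⟩
      left_inv := ?_, right_inv := ?_ }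
  · obtain ⟨hb, hm⟩ := M.2
    exact ⟨fun j => (hb 0 j).1, fun j => hm 0 1 j j (by decide) le_rfl,
      fun j j' h => hm 0 0 j j' le_rfl h, fun j j' h => hm 1 1 j j' le_rfl h,
      fun j => (hb 0 j).2, fun j => (hb 1 j).2⟩
  · obtain ⟨h1, h2, h3, h4, h5, h6⟩ := p.2
    constructor
    · intro i j
      rcases fin2 i with rfl | rfl
      · simp only [if_pos rfl]
        exact ⟨h1 j, h5 j⟩
      · simp only [if_neg (by decide : (1 : Fin 2) ≠ 0)]
        exact ⟨le_trans (h1 j) (h2 j), h6 j⟩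
    · intro i i' j j' hii' hjj'
      rcases fin2 i with rfl | rfl <;> rcases fin2 i' with rfl | rfl
      · simp only [if_pos rfl]; exact h3 j j' hjj'
      · simp only [if_pos rfl, if_neg (by decide : (1 : Fin 2) ≠ 0)]
        exact le_trans (h3 j j' hjj') (h2 j')
      · exact absurd hii' (by decide)
      · simp only [if_neg (by decide : (1 : Fin 2) ≠ 0)]; exact h4 j j' hjj'
  · intro M
    refine Subtype.ext (funext fun i => funext fun j => ?_)
    rcases fin2 i with rfl | rfl
    · simp
    · simp
  · intro p
    refine Subtype.ext (funext fun j => ?_)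
    simp

theorem count_weakly_increasing_matrices (n k : ℕ) (hn : 0 < n) (hk : 0 < k) :
    k * (WeaklyIncreasingMatrices n k).ncard =
      Nat.choose (n + k - 1) (k - 1) * Nat.choose (n + k) (k - 1) := by
  obtain ⟨a, rfl⟩ : ∃ a, n = a + 1 := ⟨n - 1, by omega⟩
  obtain ⟨b, rfl⟩ : ∃ b, k = b + 1 := ⟨k - 1, by omega⟩
  rw [WIM_ncard]
  set M := a + b + 1 with hM
  have hn1 : a + 1 + (b + 1) - 1 = M := by omega
  have hn2 : a + 1 + (b + 1) = M + 1 := by omega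
  have hn3 : b + 1 - 1 = b := by omega
  rw [hn1, hn2, hn3]
  have key : (cnt (a+1) (b+1) (b+1) : ℤ)
      = (M.choose (a+1) : ℤ) * M.choose (a+1) - (M.choose (a+2) : ℤ) * M.choose a := by
    rw [cnt_eq_J (a+1) (b+1) (b+1) le_rfl]
    show ((a+(b+1)).choose (a+1) : ℤ) * (a+(b+1)).choose (a+1)
        - ((a+(b+1)).choose (a+2) : ℤ) * (a+(b+1)).choose a = _
    rw [show a + (b+1) = M from by omega]
  have sym1 : M.choose b = M.choose (a+1) := by
    rw [← Nat.choose_symm (show b ≤ M by omega), show M - b = a + 1 from by omega]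
  have sym2 : (M+1).choose b = (M+1).choose (a+2) := by
    rw [← Nat.choose_symm (show b ≤ M + 1 by omega), show M + 1 - b = a + 2 from by omega]
  have pascal : (M+1).choose (a+2) = M.choose (a+1) + M.choose (a+2) :=
    Nat.choose_succ_succ M (a+1)
  have e1 : (M.choose (a+1) : ℤ) * (a+1) = (M.choose a : ℤ) * (b+1) := by
    have := Nat.choose_succ_right_eq M a
    rw [show M - a = b + 1 from by omega] at this
    exact_mod_cast congrArg (Nat.cast : ℕ → ℤ) this
  have e2 : (M.choose (a+2) : ℤ) * (a+2) = (M.choose (a+1) : ℤ) * b := by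
    have := Nat.choose_succ_right_eq M (a+1)
    rw [show M - (a+1) = b from by omega] at this
    exact_mod_cast congrArg (Nat.cast : ℕ → ℤ) this
  have goalZ : ((b:ℤ)+1) * (cnt (a+1) (b+1) (b+1) : ℤ)
      = (M.choose b : ℤ) * ((M+1).choose b : ℤ) := by
    rw [key, sym1, sym2, pascal]
    push_cast
    linear_combination (M.choose (a+2) : ℤ) * e1 - (M.choose (a+1) : ℤ) * e2
  exact_mod_cast goalZ
end

section
/- For all positive integers n and k, the integer k divides the product C(n+k−1, k−1) · C(n+k, k−1) of binomial coefficients. -/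
lemma aux_dvd_mul (k a b A B : ℕ) (hk : 0 < k) (hab : Nat.Coprime a b)
    (h1 : k ∣ a * A) (h2 : k ∣ b * B) : k ∣ A * B := by
  set g1 := Nat.gcd k a with hg1
  set g2 := Nat.gcd k b with hg2
  have hg1k : g1 ∣ k := Nat.gcd_dvd_left k a
  have hg2k : g2 ∣ k := Nat.gcd_dvd_left k b
  have hg1pos : 0 < g1 := Nat.gcd_pos_of_pos_left a hk
  have hg2pos : 0 < g2 := Nat.gcd_pos_of_pos_left b hk
  have hA : k / g1 ∣ A := by
    have hc : Nat.Coprime (k / g1) (a / g1) := Nat.coprime_div_gcd_div_gcd hg1pos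
    apply hc.dvd_of_dvd_mul_left
    rw [← Nat.mul_dvd_mul_iff_left hg1pos, ← Nat.mul_assoc,
        Nat.mul_div_cancel' hg1k, Nat.mul_div_cancel' (Nat.gcd_dvd_right k a)]
    exact h1
  have hB : k / g2 ∣ B := by
    have hc : Nat.Coprime (k / g2) (b / g2) := Nat.coprime_div_gcd_div_gcd hg2pos
    apply hc.dvd_of_dvd_mul_left
    rw [← Nat.mul_dvd_mul_iff_left hg2pos, ← Nat.mul_assoc,
        Nat.mul_div_cancel' hg2k, Nat.mul_div_cancel' (Nat.gcd_dvd_right k b)]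
    exact h2
  have hcop : Nat.Coprime g1 g2 :=
    Nat.Coprime.coprime_dvd_right (Nat.gcd_dvd_right k b)
      (Nat.Coprime.coprime_dvd_left (Nat.gcd_dvd_right k a) hab)
  have hgg : g1 * g2 ∣ k := hcop.mul_dvd_of_dvd_of_dvd hg1k hg2k
  have hkey : k ∣ (k / g1) * (k / g2) := by
    obtain ⟨t, ht⟩ := hgg
    have h1' : k / g1 = g2 * t := by
      rw [ht, Nat.mul_assoc, Nat.mul_div_cancel_left _ hg1pos]
    have h2' : k / g2 = g1 * t := by
      rw [ht, Nat.mul_comm g1 g2, Nat.mul_assoc, Nat.mul_div_cancel_left _ hg2pos]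
    rw [h1', h2', ht]
    exact ⟨t, by ring⟩
  exact hkey.trans (mul_dvd_mul hA hB)

theorem k_dvd_choose_mul_choose (n k : ℕ) (hn : 0 < n) (hk : 0 < k) :
    k ∣ Nat.choose (n + k - 1) (k - 1) * Nat.choose (n + k) (k - 1) := by
  obtain ⟨m, rfl⟩ : ∃ m, k = m + 1 := ⟨k - 1, (Nat.succ_pred_eq_of_pos hk).symm⟩
  simp only [Nat.add_succ_sub_one, Nat.add_sub_cancel]
  apply aux_dvd_mul (m + 1) n (n + 1) _ _ (Nat.succ_pos m) (by simp)
  · have h := Nat.choose_succ_right_eq (n + m) m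
    have hsub : n + m - m = n := by omega
    rw [hsub] at h
    exact ⟨Nat.choose (n + m) (m + 1), by rw [Nat.mul_comm n _, ← h, Nat.mul_comm]⟩
  · have h := Nat.choose_succ_right_eq (n + m + 1) m
    have hsub : n + m + 1 - m = n + 1 := by omega
    rw [hsub] at h
    exact ⟨Nat.choose (n + m + 1) (m + 1), by rw [show n + (m+1) = n + m + 1 from rfl, Nat.mul_comm (n+1) _, ← h, Nat.mul_comm]⟩
end

section
/- For all positive integers n and k, the number of 2×n weakly increasing matrices with entries in {1,…,k} equals the number of pairs (P₁, P₂) of non-intersecting lattice paths where P₁ goes from (0,0) to (k−1, n) and P₂ goes from (1,−1) to (k, n−1). -/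
/-- A lattice path from `a` to `b` in `ℤ²`: a finite sequence of points starting at `a`,
ending at `b`, where each consecutive difference is `(1,0)` or `(0,1)`. -/
def IsLatticePath (p : List (ℤ × ℤ)) (a b : ℤ × ℤ) : Prop :=
  p.head? = some a ∧ p.getLast? = some b ∧
    List.Chain' (fun u v => v = u + (1, 0) ∨ v = u + (0, 1)) p

/-- Horizontal segment of points `(x,y), (x+1,y), …, (x+m,y)`. -/
def segN (x y : ℤ) : ℕ → List (ℤ × ℤ)
  | 0 => [(x, y)]
  | m + 1 => (x, y) :: segN (x + 1) y m

/-- The canonical lattice path starting at `(x,y)`, going up at x-coordinates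
listed in `L` (weakly increasing), finishing at x-coordinate `X`. -/
def pathOf (x y : ℤ) : List ℤ → ℤ → List (ℤ × ℤ)
  | [], X => segN x y (X - x).toNat
  | u :: L, X => segN x y (u - x).toNat ++ pathOf u (y + 1) L X

lemma segN_ne_nil (x y : ℤ) (m : ℕ) : segN x y m ≠ [] := by
  cases m <;> simp [segN]

lemma segN_head? (x y : ℤ) (m : ℕ) : (segN x y m).head? = some (x, y) := by
  cases m <;> simp [segN]

lemma segN_getLast? (x y : ℤ) (m : ℕ) : (segN x y m).getLast? = some (x + m, y) := by
  induction m generalizing x with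
  | zero => simp [segN]
  | succ m ih =>
    rw [segN, List.getLast?_cons, ih]
    · simp [List.headI]; ring


lemma segN_chain' (x y : ℤ) (m : ℕ) :
    List.Chain' (fun u v => v = u + (1, 0) ∨ v = u + (0, 1)) (segN x y m) := by
  induction m generalizing x with
  | zero => simp [segN, List.Chain']
  | succ m ih =>
    rw [segN, List.Chain', List.isChain_cons]
    refine ⟨?_, ih _⟩
    intro z hz
    rw [segN_head?] at hz
    left
    simp at hz
    simp [← hz, Prod.ext_iff]

lemma segN_mem (x y : ℤ) (m : ℕ) (a b : ℤ) :
    (a, b) ∈ segN x y m ↔ b = y ∧ x ≤ a ∧ a ≤ x + m := by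
  induction m generalizing x with
  | zero => simp [segN, Prod.ext_iff]; omega
  | succ m ih =>
    rw [segN]
    simp only [List.mem_cons, ih (x+1), Prod.mk.injEq]
    push_cast
    omega

lemma pathOf_cons_exists (x y : ℤ) (L : List ℤ) (X : ℤ) :
    ∃ t, pathOf x y L X = (x, y) :: t := by
  cases L with
  | nil =>
    rw [pathOf]
    rcases h : (X - x).toNat with _ | m
    · exact ⟨[], rfl⟩
    · exact ⟨segN (x + 1) y m, rfl⟩
  | cons u L =>
    rw [pathOf]
    rcases h : (u - x).toNat with _ | m
    · exact ⟨pathOf u (y + 1) L X, rfl⟩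
    · exact ⟨segN (x + 1) y m ++ pathOf u (y + 1) L X, rfl⟩

lemma pathOf_head? (x y : ℤ) (L : List ℤ) (X : ℤ) :
    (pathOf x y L X).head? = some (x, y) := by
  obtain ⟨t, ht⟩ := pathOf_cons_exists x y L X
  simp [ht]

lemma isLatticePath_pathOf (x y X : ℤ) (L : List ℤ)
    (h : List.Chain (· ≤ ·) x (L ++ [X])) :
    IsLatticePath (pathOf x y L X) (x, y) (X, y + L.length) := by
  induction L generalizing x y with
  | nil =>
    simp only [List.nil_append, List.chain_cons] at h
    obtain ⟨hxX, -⟩ := h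
    refine ⟨segN_head? _ _ _, ?_, segN_chain' _ _ _⟩
    have hX : x + ((X - x).toNat : ℤ) = X := by omega
    rw [pathOf, segN_getLast?, hX]
    simp
  | cons u L ih =>
    rw [List.Chain, List.cons_append, List.chain_cons] at h
    obtain ⟨hxu, h⟩ := h
    have ihp := ih u (y + 1) h
    obtain ⟨ih1, ih2, ih3⟩ := ihp
    rw [pathOf]
    refine ⟨?_, ?_, ?_⟩
    · rcases List.exists_cons_of_ne_nil (segN_ne_nil x y (u - x).toNat) with ⟨a, t, hseg⟩
      have := segN_head? x y (u - x).toNat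
      rw [hseg] at this ⊢
      simp at this ⊢
      exact this
    · rw [List.getLast?_append, ih2]
      simp
      push_cast
      ring
    · rw [List.Chain', List.isChain_append]
      refine ⟨segN_chain' _ _ _, ih3, ?_⟩
      intro a ha b hb
      rw [segN_getLast?] at ha
      rw [ih1] at hb
      simp only [Option.mem_def, Option.some_inj] at ha hb
      right
      have hu : x + ((u - x).toNat : ℤ) = u := by omega
      rw [← ha, ← hb, hu]
      simp [Prod.ext_iff]

lemma mem_pathOf (x y X : ℤ) (L : List ℤ) (h : List.Chain (· ≤ ·) x (L ++ [X])) (a b : ℤ) :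
    (a, b) ∈ pathOf x y L X ↔
      ∃ j : ℕ, j ≤ L.length ∧ b = y + j ∧
        (x :: L).getD j 0 ≤ a ∧ a ≤ (L ++ [X]).getD j 0 := by
  induction L generalizing x y with
  | nil =>
    simp only [List.nil_append, List.chain_cons] at h
    obtain ⟨hxX, -⟩ := h
    rw [pathOf, segN_mem]
    constructor
    · rintro ⟨rfl, h1, h2⟩
      exact ⟨0, by simp; omega⟩
    · rintro ⟨j, hj, hb, h1, h2⟩
      simp only [List.length_nil, Nat.le_zero] at hj
      subst hj
      simp only [Nat.cast_zero, add_zero] at hb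
      simp only [List.getD_cons_zero] at h1
      simp only [List.nil_append, List.getD_cons_zero] at h2
      exact ⟨hb, h1, by omega⟩
  | cons u L ih =>
    rw [List.Chain, List.cons_append, List.chain_cons] at h
    obtain ⟨hxu, h⟩ := h
    rw [pathOf, List.mem_append, segN_mem, ih u (y + 1) h]
    constructor
    · rintro (⟨rfl, h1, h2⟩ | ⟨j, hj, hb, h1, h2⟩)
      · refine ⟨0, by simp, by simp, by simpa using h1, ?_⟩
        simp only [List.cons_append, List.getD_cons_zero]
        omega
      · refine ⟨j + 1, by simpa using hj, by push_cast [hb]; ring, ?_, ?_⟩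
        · simpa using h1
        · simpa using h2
    · rintro ⟨j, hj, hb, h1, h2⟩
      cases j with
      | zero =>
        left
        simp only [List.getD_cons_zero] at h1
        simp only [List.cons_append, List.getD_cons_zero] at h2
        exact ⟨by simpa using hb, h1, by omega⟩
      | succ j =>
        right
        simp only [List.getD_cons_succ] at h1
        simp only [List.cons_append, List.getD_cons_succ] at h2
        exact ⟨j, by simpa using hj, by push_cast at hb ⊢; linarith, h1, h2⟩

lemma segN_snd (x y : ℤ) (m : ℕ) : ∀ z ∈ segN x y m, z.2 = y := by
  induction m generalizing x with
  | zero => simp [segN]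
  | succ m ih => simpa [segN] using ih (x + 1)

lemma dropWhile_pathOf (x y : ℤ) (u : ℤ) (L : List ℤ) (X : ℤ) :
    (pathOf x y (u :: L) X).dropWhile (fun z => decide (z.2 = y)) = pathOf u (y + 1) L X := by
  rw [pathOf, List.dropWhile_append]
  have h1 : (segN x y (u - x).toNat).dropWhile (fun z => decide (z.2 = y)) = [] := by
    rw [List.dropWhile_eq_nil_iff]
    intro z hz
    simp [segN_snd x y _ z hz]
  rw [h1]
  simp only [List.isEmpty_nil, if_true]
  obtain ⟨t, ht⟩ := pathOf_cons_exists u (y + 1) L X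
  rw [ht, List.dropWhile_cons]
  simp

lemma pathOf_injective : ∀ (L L' : List ℤ) (x y X : ℤ),
    pathOf x y L X = pathOf x y L' X → L = L' := by
  intro L
  induction L with
  | nil =>
    intro L' x y X hEq
    cases L' with
    | nil => rfl
    | cons u' L' =>
      exfalso
      have h0 : (pathOf x y ([] : List ℤ) X).dropWhile (fun z => decide (z.2 = y)) = [] := by
        rw [pathOf, List.dropWhile_eq_nil_iff]
        intro z hz
        simp [segN_snd x y _ z hz]
      rw [hEq, dropWhile_pathOf] at h0
      obtain ⟨t, ht⟩ := pathOf_cons_exists u' (y + 1) L' X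
      rw [ht] at h0
      simp at h0
  | cons u L ih =>
    intro L' x y X hEq
    cases L' with
    | nil =>
      exfalso
      have h0 : (pathOf x y ([] : List ℤ) X).dropWhile (fun z => decide (z.2 = y)) = [] := by
        rw [pathOf, List.dropWhile_eq_nil_iff]
        intro z hz
        simp [segN_snd x y _ z hz]
      rw [← hEq, dropWhile_pathOf] at h0
      obtain ⟨t, ht⟩ := pathOf_cons_exists u (y + 1) L X
      rw [ht] at h0
      simp at h0
    | cons u' L' =>
      have h0 := dropWhile_pathOf x y u L X
      rw [hEq, dropWhile_pathOf] at h0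
      have hu : u = u' := by
        have h1 := pathOf_head? u' (y + 1) L' X
        rw [h0, pathOf_head?] at h1
        simp [Prod.ext_iff] at h1
        exact h1
      subst hu
      rw [ih L' u (y + 1) X h0.symm]

lemma chain_le_of_le {x c : ℤ} {l : List ℤ} (hxc : x ≤ c) (h : List.Chain (· ≤ ·) c l) :
    List.Chain (· ≤ ·) x l := by
  cases l with
  | nil => exact List.Chain.nil
  | cons a l =>
    rw [List.Chain, List.chain_cons] at h ⊢
    exact ⟨le_trans hxc h.1, h.2⟩

lemma segN_cons_of_le (x y X : ℤ) (h : x + 1 ≤ X) :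
    segN x y (X - x).toNat = (x, y) :: segN (x + 1) y (X - (x + 1)).toNat := by
  have h1 : (X - x).toNat = (X - (x + 1)).toNat + 1 := by omega
  rw [h1, segN]

lemma pathOf_cons_of_lt (x y X : ℤ) (L : List ℤ)
    (h : List.Chain (· ≤ ·) (x + 1) (L ++ [X])) :
    pathOf x y L X = (x, y) :: pathOf (x + 1) y L X := by
  cases L with
  | nil =>
    simp only [List.Chain, List.nil_append, List.chain_cons] at h
    rw [pathOf, pathOf, segN_cons_of_le x y X h.1]
  | cons u L =>
    simp only [List.Chain, List.cons_append, List.chain_cons] at h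
    rw [pathOf, pathOf, segN_cons_of_le x y u h.1, List.cons_append]

lemma exists_pathOf : ∀ (p : List (ℤ × ℤ)) (x y X Y : ℤ),
    IsLatticePath p (x, y) (X, Y) →
    ∃ L : List ℤ, List.Chain (· ≤ ·) x (L ++ [X]) ∧ y + (L.length : ℤ) = Y ∧
      p = pathOf x y L X := by
  intro p
  induction p with
  | nil => rintro x y X Y ⟨h1, -, -⟩; simp at h1
  | cons c p ih =>
    rintro x y X Y ⟨h1, h2, h3⟩
    simp only [List.head?_cons, Option.some_inj] at h1
    subst h1
    cases p with
    | nil =>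
      simp only [List.getLast?_singleton, Option.some_inj, Prod.ext_iff] at h2
      obtain ⟨hX, hY⟩ := h2
      subst hX; subst hY
      refine ⟨[], ?_, by simp, ?_⟩
      · exact List.Chain.cons le_rfl List.Chain.nil
      · rw [pathOf]
        have h0 : (x - x).toNat = 0 := by omega
        rw [h0]
        rfl
    | cons c' p' =>
      rw [List.Chain', List.isChain_cons_cons] at h3
      obtain ⟨hstep, h3'⟩ := h3
      have hrest : IsLatticePath (c' :: p') c' (X, Y) :=
        ⟨by simp, by rw [← h2, List.getLast?_cons_cons], h3'⟩
      rcases hstep with hr | hu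
      · -- right step : c' = (x+1, y)
        have hc' : c' = (x + 1, y) := by rw [hr]; simp [Prod.ext_iff]
        subst hc'
        obtain ⟨L, hc, hl, hp⟩ := ih (x + 1) y X Y hrest
        refine ⟨L, chain_le_of_le (by omega) hc, hl, ?_⟩
        rw [pathOf_cons_of_lt x y X L hc, ← hp]
      · -- up step : c' = (x, y+1)
        have hc' : c' = (x, y + 1) := by rw [hu]; simp [Prod.ext_iff]
        subst hc'
        obtain ⟨L, hc, hl, hp⟩ := ih x (y + 1) X Y hrest
        refine ⟨x :: L, ?_, by simp; push_cast; linarith, ?_⟩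
        · rw [List.Chain, List.cons_append, List.chain_cons]
          exact ⟨le_refl x, hc⟩
        · rw [pathOf]
          have h0 : (x - x).toNat = 0 := by omega
          rw [h0, ← hp]
          rfl

lemma chain_facts : ∀ (L : List ℤ) (x X : ℤ), List.Chain (· ≤ ·) x (L ++ [X]) →
    x ≤ X ∧ (∀ i < L.length, x ≤ L.getD i 0 ∧ L.getD i 0 ≤ X) ∧
      (∀ i j, i ≤ j → j < L.length → L.getD i 0 ≤ L.getD j 0) := by
  intro L
  induction L with
  | nil =>
    intro x X h
    simp only [List.Chain, List.nil_append, List.chain_cons] at h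
    exact ⟨h.1, by simp, by simp⟩
  | cons u L ih =>
    intro x X h
    rw [List.Chain, List.cons_append, List.chain_cons] at h
    obtain ⟨hxu, h⟩ := h
    obtain ⟨huX, hbd, hmono⟩ := ih u X h
    refine ⟨le_trans hxu huX, ?_, ?_⟩
    · intro i hi
      cases i with
      | zero => exact ⟨by simpa using hxu, by simpa using huX⟩
      | succ i =>
        simp only [List.getD_cons_succ]
        have := hbd i (by simpa using hi)
        exact ⟨le_trans hxu this.1, this.2⟩
    · intro i j hij hj
      cases j with
      | zero =>
        interval_cases i
        simp
      | succ j =>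
        cases i with
        | zero =>
          simp only [List.getD_cons_zero, List.getD_cons_succ]
          exact (hbd j (by simpa using hj)).1
        | succ i =>
          simp only [List.getD_cons_succ]
          exact hmono i j (by omega) (by simpa using hj)

lemma chain_of_getD : ∀ (L : List ℤ) (x X : ℤ),
    x ≤ X → (∀ i < L.length, x ≤ L.getD i 0 ∧ L.getD i 0 ≤ X) →
    (∀ i j, i ≤ j → j < L.length → L.getD i 0 ≤ L.getD j 0) →
    List.Chain (· ≤ ·) x (L ++ [X]) := by
  intro L
  induction L with
  | nil =>
    intro x X hxX _ _
    exact List.Chain.cons hxX List.Chain.nil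
  | cons u L ih =>
    intro x X hxX hbd hmono
    rw [List.Chain, List.cons_append, List.chain_cons]
    have hxu : x ≤ u := by simpa using (hbd 0 (by simp)).1
    have huX : u ≤ X := by simpa using (hbd 0 (by simp)).2
    refine ⟨hxu, ih u X huX ?_ ?_⟩
    · intro i hi
      have h1 := hmono 0 (i + 1) (by omega) (by simpa using hi)
      have h2 := hbd (i + 1) (by simpa using hi)
      simp only [List.getD_cons_zero, List.getD_cons_succ] at h1 h2
      exact ⟨h1, h2.2⟩
    · intro i j hij hj
      have := hmono (i + 1) (j + 1) (by omega) (by simpa using hj)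
      simpa using this

/-- The key disjointness criterion. -/
lemma disjoint_pathOf_iff (n k : ℕ) (A B : List ℤ) (hA : A.length = n) (hB : B.length = n)
    (hcA : List.Chain (· ≤ ·) 0 (A ++ [(k : ℤ) - 1]))
    (hcB : List.Chain (· ≤ ·) 1 (B ++ [(k : ℤ)])) :
    (∀ v ∈ pathOf 0 0 A ((k : ℤ) - 1), v ∉ pathOf 1 (-1) B (k : ℤ)) ↔
      ∀ j < n, A.getD j 0 < B.getD j 0 := by
  obtain ⟨hBk, hBbd, hBmono⟩ := chain_facts B 1 ((k : ℤ)) hcB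
  constructor
  · -- disjoint → strict domination; contrapose via a minimal violation
    intro hdisj
    by_contra hcon
    push_neg at hcon
    have hex : ∃ j, j < n ∧ B.getD j 0 ≤ A.getD j 0 := by
      obtain ⟨j, hj, hle⟩ := hcon
      exact ⟨j, hj, hle⟩
    classical
    obtain ⟨j₀, ⟨hj₀n, hj₀le⟩, hmin⟩ :
        ∃ j₀, (j₀ < n ∧ B.getD j₀ 0 ≤ A.getD j₀ 0) ∧
          ∀ m, m < j₀ → ¬(m < n ∧ B.getD m 0 ≤ A.getD m 0) :=
      ⟨Nat.find hex, Nat.find_spec hex, fun m hm => Nat.find_min hex hm⟩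
    set a : ℤ := B.getD j₀ 0 with ha
    have hmem1 : ((a, (j₀ : ℤ)) : ℤ × ℤ) ∈ pathOf 0 0 A ((k : ℤ) - 1) := by
      rw [mem_pathOf 0 0 _ A hcA]
      refine ⟨j₀, by omega, by simp, ?_, ?_⟩
      · -- (0 :: A).getD j₀ ≤ a
        cases j₀ with
        | zero =>
          simp only [List.getD_cons_zero]
          have := (hBbd 0 (by omega)).1
          omega
        | succ m =>
          simp only [List.getD_cons_succ]
          have hAm : A.getD m 0 < B.getD m 0 := by
            have := hmin m (by omega)
            push_neg at this
            have := this (by omega)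
            omega
          have hBmm : B.getD m 0 ≤ B.getD (m + 1) 0 := hBmono m (m + 1) (by omega) (by omega)
          omega
      · -- a ≤ (A ++ [k-1]).getD j₀ = A.getD j₀
        rw [List.getD_append _ _ _ _ (by omega)]
        exact hj₀le
    have hmem2 : ((a, (j₀ : ℤ)) : ℤ × ℤ) ∈ pathOf 1 (-1) B (k : ℤ) := by
      rw [mem_pathOf 1 (-1) _ B hcB]
      refine ⟨j₀ + 1, by omega, by push_cast; ring, by simp only [List.getD_cons_succ]; exact ha.ge, ?_⟩
      -- a ≤ (B ++ [k]).getD (j₀+1)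
      by_cases hlt : j₀ + 1 < n
      · rw [List.getD_append _ _ _ _ (by omega)]
        exact hBmono j₀ (j₀ + 1) (by omega) (by omega)
      · have hj1 : j₀ + 1 = n := by omega
        have : (B ++ [(k : ℤ)]).getD (j₀ + 1) 0 = (k : ℤ) := by
          rw [hj1, ← hB]
          simp
        rw [this]
        exact (hBbd j₀ (by omega)).2
    exact hdisj _ hmem1 hmem2
  · -- strict domination → disjoint
    rintro hdom ⟨a, b⟩ h1 h2
    rw [mem_pathOf 0 0 _ A hcA] at h1
    rw [mem_pathOf 1 (-1) _ B hcB] at h2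
    obtain ⟨j, hj, hbj, hj1, hj2⟩ := h1
    obtain ⟨j', hj', hbj', hj1', hj2'⟩ := h2
    have hjj' : j' = j + 1 := by omega
    subst hjj'
    have hjn : j < n := by omega
    rw [List.getD_append _ _ _ _ (by omega)] at hj2
    simp only [List.getD_cons_succ] at hj1'
    have := hdom j hjn
    omega

lemma getD_map_finRange {n : ℕ} (f : Fin n → ℤ) (j : ℕ) (h : j < n) :
    ((List.finRange n).map f).getD j 0 = f ⟨j, h⟩ := by
  rw [List.getD_eq_getElem _ _ (by simpa using h)]
  simp

/-- The bijection from matrices to path pairs. -/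
def toPaths (n k : ℕ) (M : Fin 2 → Fin n → ℕ) : List (ℤ × ℤ) × List (ℤ × ℤ) :=
  (pathOf 0 0 ((List.finRange n).map fun j => (M 0 j : ℤ) - 1) ((k : ℤ) - 1),
   pathOf 1 (-1) ((List.finRange n).map fun j => (M 1 j : ℤ)) (k : ℤ))

section main
variable {n k : ℕ}

lemma chainA (hk : 0 < k) {M : Fin 2 → Fin n → ℕ} (hM : M ∈ WeaklyIncreasingMatrices n k) :
    List.Chain (· ≤ ·) 0 (((List.finRange n).map fun j => (M 0 j : ℤ) - 1) ++ [(k : ℤ) - 1]) := by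
  obtain ⟨hbd, hmono⟩ := hM
  apply chain_of_getD
  · omega
  · intro i hi
    simp only [List.length_map, List.length_finRange] at hi
    rw [getD_map_finRange _ i hi]
    have := hbd 0 ⟨i, hi⟩
    push_cast
    omega
  · intro i j hij hj
    simp only [List.length_map, List.length_finRange] at hj
    rw [getD_map_finRange _ i (by omega), getD_map_finRange _ j hj]
    have := hmono 0 0 ⟨i, by omega⟩ ⟨j, hj⟩ le_rfl (by simpa using hij)
    push_cast
    omega

lemma chainB (hk : 0 < k) {M : Fin 2 → Fin n → ℕ} (hM : M ∈ WeaklyIncreasingMatrices n k) :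
    List.Chain (· ≤ ·) 1 (((List.finRange n).map fun j => (M 1 j : ℤ)) ++ [(k : ℤ)]) := by
  obtain ⟨hbd, hmono⟩ := hM
  apply chain_of_getD
  · omega
  · intro i hi
    simp only [List.length_map, List.length_finRange] at hi
    rw [getD_map_finRange _ i hi]
    have := hbd 1 ⟨i, hi⟩
    push_cast
    omega
  · intro i j hij hj
    simp only [List.length_map, List.length_finRange] at hj
    rw [getD_map_finRange _ i (by omega), getD_map_finRange _ j hj]
    have := hmono 1 1 ⟨i, by omega⟩ ⟨j, hj⟩ le_rfl (by simpa using hij)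
    push_cast
    omega

lemma toPaths_mapsTo (hn : 0 < n) (hk : 0 < k) {M : Fin 2 → Fin n → ℕ}
    (hM : M ∈ WeaklyIncreasingMatrices n k) :
    IsLatticePath (toPaths n k M).1 (0, 0) ((k : ℤ) - 1, (n : ℤ)) ∧
    IsLatticePath (toPaths n k M).2 (1, -1) ((k : ℤ), (n : ℤ) - 1) ∧
    ∀ v, v ∈ (toPaths n k M).1 → v ∉ (toPaths n k M).2 := by
  refine ⟨?_, ?_, ?_⟩
  · have h := isLatticePath_pathOf 0 0 ((k : ℤ) - 1) _ (chainA hk hM)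
    rw [toPaths]
    simpa using h
  · have h := isLatticePath_pathOf 1 (-1) (k : ℤ) _ (chainB hk hM)
    simp only [List.length_map, List.length_finRange] at h
    rw [show (-1 : ℤ) + (n : ℤ) = (n : ℤ) - 1 by ring] at h
    rw [toPaths]
    exact h
  · rw [toPaths]
    simp only
    rw [disjoint_pathOf_iff n k _ _ (by simp) (by simp) (chainA hk hM) (chainB hk hM)]
    intro j hj
    rw [getD_map_finRange _ j hj, getD_map_finRange _ j hj]
    have h1 := hM.2 0 1 ⟨j, hj⟩ ⟨j, hj⟩ (by omega) le_rfl
    have h2 := hM.1 0 ⟨j, hj⟩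
    push_cast
    omega

lemma toPaths_injOn (hn : 0 < n) (hk : 0 < k) :
    Set.InjOn (toPaths n k) (WeaklyIncreasingMatrices n k) := by
  intro M hM M' hM' hEq
  have h1 : pathOf 0 0 ((List.finRange n).map fun j => (M 0 j : ℤ) - 1) ((k : ℤ) - 1)
      = pathOf 0 0 ((List.finRange n).map fun j => (M' 0 j : ℤ) - 1) ((k : ℤ) - 1) :=
    congrArg Prod.fst hEq
  have h2 : pathOf 1 (-1) ((List.finRange n).map fun j => (M 1 j : ℤ)) (k : ℤ)
      = pathOf 1 (-1) ((List.finRange n).map fun j => (M' 1 j : ℤ)) (k : ℤ) :=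
    congrArg Prod.snd hEq
  have e1 := pathOf_injective _ _ _ _ _ h1
  have e2 := pathOf_injective _ _ _ _ _ h2
  rw [List.map_inj_left] at e1 e2
  funext i j
  fin_cases i
  · show M 0 j = M' 0 j
    have := e1 j (List.mem_finRange j); omega
  · show M 1 j = M' 1 j
    have := e2 j (List.mem_finRange j); omega

lemma toPaths_image (hn : 0 < n) (hk : 0 < k) :
    toPaths n k '' WeaklyIncreasingMatrices n k =
      {pq : List (ℤ × ℤ) × List (ℤ × ℤ) |
        IsLatticePath pq.1 (0, 0) ((k : ℤ) - 1, (n : ℤ)) ∧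
        IsLatticePath pq.2 (1, -1) ((k : ℤ), (n : ℤ) - 1) ∧
        ∀ v, v ∈ pq.1 → v ∉ pq.2} := by
  apply Set.eq_of_subset_of_subset
  · rintro pq ⟨M, hM, rfl⟩
    exact toPaths_mapsTo hn hk hM
  · rintro ⟨p, q⟩ ⟨hp, hq, hdisj⟩
    obtain ⟨L, hcL, hlenL, rfl⟩ := exists_pathOf p 0 0 ((k : ℤ) - 1) (n : ℤ) hp
    obtain ⟨L', hcL', hlenL', rfl⟩ := exists_pathOf q 1 (-1) (k : ℤ) ((n : ℤ) - 1) hq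
    have hLn : L.length = n := by omega
    have hL'n : L'.length = n := by omega
    obtain ⟨-, hbdL, hmonoL⟩ := chain_facts L 0 ((k : ℤ) - 1) hcL
    obtain ⟨-, hbdL', hmonoL'⟩ := chain_facts L' 1 (k : ℤ) hcL'
    have hdom : ∀ j < n, L.getD j 0 < L'.getD j 0 := by
      rw [← disjoint_pathOf_iff n k L L' hLn hL'n hcL hcL']
      exact hdisj
    set f : Fin n → ℕ := fun j => (L.getD j 0 + 1).toNat with hf
    set g : Fin n → ℕ := fun j => (L'.getD j 0).toNat with hg
    have hcase : ∀ (i : Fin 2), i = 0 ∨ i = 1 := by decide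
    refine ⟨![f, g], ⟨?_, ?_⟩, ?_⟩
    · intro i j
      rcases hcase i with rfl | rfl
      · simp only [Matrix.cons_val_zero, hf]
        have h1 := hbdL j (by omega)
        omega
      · simp only [Matrix.cons_val_one, Matrix.head_cons, Matrix.cons_val_zero, hg]
        have h1 := hbdL' j (by omega)
        omega
    · intro i i' j j' hii' hjj'
      have hjj : (j : ℕ) ≤ (j' : ℕ) := hjj'
      rcases hcase i with rfl | rfl <;> rcases hcase i' with rfl | rfl <;>
        simp only [Matrix.cons_val_zero, Matrix.cons_val_one, Matrix.head_cons, hf, hg]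
      · have h1 := hmonoL j j' hjj (by omega)
        omega
      · have h1 := hmonoL' j j' hjj (by omega)
        have h2 := hdom j (by omega)
        omega
      · exact absurd hii' (by decide)
      · have h1 := hmonoL' j j' hjj (by omega)
        omega
    · have hA : ((List.finRange n).map fun j : Fin n => ((f j : ℕ) : ℤ) - 1) = L := by
        apply List.ext_getElem (by simp [hLn])
        intro j h1 h2
        simp only [List.getElem_map, List.getElem_finRange, hf, Fin.coe_cast, Fin.val_mk]
        rw [← List.getD_eq_getElem L 0 h2]
        have hb := hbdL j (by omega)
        omega
      have hB : ((List.finRange n).map fun j : Fin n => ((g j : ℕ) : ℤ)) = L' := by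
        apply List.ext_getElem (by simp [hL'n])
        intro j h1 h2
        simp only [List.getElem_map, List.getElem_finRange, hg, Fin.coe_cast, Fin.val_mk]
        rw [← List.getD_eq_getElem L' 0 h2]
        have hb := hbdL' j (by omega)
        omega
      rw [toPaths]
      simp only [Matrix.cons_val_zero, Matrix.cons_val_one, Matrix.head_cons]
      rw [hA, hB]

end main

theorem count_eq_count_nonintersecting_path_pairs (n k : ℕ) (hn : 0 < n) (hk : 0 < k) :
    (WeaklyIncreasingMatrices n k).ncard =
      {pq : List (ℤ × ℤ) × List (ℤ × ℤ) |
        IsLatticePath pq.1 (0, 0) ((k : ℤ) - 1, (n : ℤ)) ∧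
        IsLatticePath pq.2 (1, -1) ((k : ℤ), (n : ℤ) - 1) ∧
        ∀ v, v ∈ pq.1 → v ∉ pq.2}.ncard := by
  rw [← toPaths_image hn hk, Set.ncard_image_of_injOn (toPaths_injOn hn hk)]
end

section
/- For all nonnegative integers n and r with n ≥ 1, the number N of pairs of weakly increasing sequences (x₁ ≤ ⋯ ≤ x_r, y₁ ≤ ⋯ ≤ y_r) with all terms in {0,1,…,n} and y_i ≤ x_i for every i satisfies (r+1) · N = C(n+r, r) · C(n+r+1, r). -/
lemma sm_gap {k m : ℕ} (φ : Fin k → Fin m) (h : StrictMono φ) :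
    ∀ (a b : ℕ) (ha : a < k) (hb : b < k), a ≤ b →
      (φ ⟨a, ha⟩ : ℕ) + b ≤ (φ ⟨b, hb⟩ : ℕ) + a := by
  intro a b ha hb hab
  induction b with
  | zero =>
    have : a = 0 := by omega
    subst this
    simp
  | succ c ih =>
    rcases Nat.eq_or_lt_of_le hab with rfl | hlt
    · omega
    · have hc : c < k := by omega
      have h1 := ih hc (by omega)
      have h2 : (φ ⟨c, hc⟩ : ℕ) < (φ ⟨c+1, hb⟩ : ℕ) := h (by simp [Fin.lt_def])
      omega

lemma ncard_monotone_Icc (k L N : ℕ) (hLN : L ≤ N) :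
    {f : Fin k → ℕ | Monotone f ∧ ∀ i, L ≤ f i ∧ f i ≤ N}.ncard
      = ((N - L) + k).choose k := by
  classical
  set S := {f : Fin k → ℕ | Monotone f ∧ ∀ i, L ≤ f i ∧ f i ≤ N} with hS
  have key : ∀ (f : Fin k → ℕ), f ∈ S →
      ∀ i : Fin k, (f i - L) + (i : ℕ) < (N - L) + k := by
    intro f hf i
    have := (hf.2 i).1; have := (hf.2 i).2; have := i.isLt; omega
  have hsm : ∀ (f : Fin k → ℕ) (hf : f ∈ S),
      StrictMono (fun i : Fin k => (⟨(f i - L) + i, key f hf i⟩ : Fin ((N - L) + k))) := by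
    intro f hf a b hab
    have h1 := (hf.2 a).1
    have := hf.1 hab.le
    have : (a : ℕ) < b := hab
    simp only [Fin.mk_lt_mk]
    omega
  have hcard : ∀ (f : Fin k → ℕ) (hf : f ∈ S),
      (Finset.univ.image (fun i : Fin k =>
        (⟨(f i - L) + i, key f hf i⟩ : Fin ((N - L) + k)))).card = k := by
    intro f hf
    rw [Finset.card_image_of_injective _ (hsm f hf).injective, Finset.card_univ,
      Fintype.card_fin]
  have e : S ≃ {s : Finset (Fin ((N - L) + k)) // s.card = k} :=
    { toFun := fun f => ⟨Finset.univ.image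
        (fun i : Fin k => (⟨(f.1 i - L) + i, key f.1 f.2 i⟩ : Fin ((N - L) + k))),
        hcard f.1 f.2⟩
      invFun := fun s => ⟨fun i => ((s.1.orderEmbOfFin s.2 i : ℕ) - i) + L, by
        constructor
        · intro i j hij
          dsimp only
          have := sm_gap _ (s.1.orderEmbOfFin s.2).strictMono i j i.isLt j.isLt hij
          simp only [Fin.eta] at this
          omega
        · intro i
          dsimp only
          refine ⟨by omega, ?_⟩
          have hk : 0 < k := i.pos
          have h1 := sm_gap _ (s.1.orderEmbOfFin s.2).strictMono i (k-1) i.isLt (by omega)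
            (by omega)
          have h2 := (s.1.orderEmbOfFin s.2 ⟨k-1, by omega⟩).isLt
          simp only [Fin.eta] at h1
          omega⟩
      left_inv := by
        rintro ⟨f, hf⟩
        apply Subtype.ext
        funext i
        have hmem : ∀ x, (fun i : Fin k => (⟨(f i - L) + i, key f hf i⟩ : Fin ((N - L) + k))) x ∈
            Finset.univ.image (fun i : Fin k => (⟨(f i - L) + i, key f hf i⟩ : Fin ((N - L) + k))) :=
          fun x => Finset.mem_image_of_mem _ (Finset.mem_univ x)
        have heq := (Finset.orderEmbOfFin_unique (hcard f hf) hmem (hsm f hf)).symm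
        have h2 := congrFun heq i
        dsimp only
        rw [h2]
        have := (hf.2 i).1
        dsimp only
        omega
      right_inv := by
        rintro ⟨s, hs⟩
        apply Subtype.ext
        dsimp only
        have hge : ∀ i : Fin k, (i : ℕ) ≤ (s.orderEmbOfFin hs i : ℕ) := by
          intro i
          have hk : 0 < k := i.pos
          have := sm_gap _ (s.orderEmbOfFin hs).strictMono 0 i (by omega) i.isLt (by omega)
          simp only [Fin.eta] at this
          omega
        have hfun : ∀ (pf : ∀ i : Fin k,
              ((((s.orderEmbOfFin hs i : ℕ) - i) + L) - L) + (i:ℕ) < (N - L) + k),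
            (fun i : Fin k => (⟨((((s.orderEmbOfFin hs i : ℕ) - i) + L) - L) + i, pf i⟩ :
              Fin ((N - L) + k))) = fun i => s.orderEmbOfFin hs i := by
          intro pf
          funext i
          apply Fin.ext
          dsimp only
          have := hge i
          omega
        rw [hfun]
        apply Finset.coe_injective
        rw [Finset.coe_image, Finset.coe_univ, Set.image_univ]
        exact Finset.range_orderEmbOfFin s hs }
  rw [← Nat.card_coe_set_eq, Nat.card_congr e, Nat.card_eq_fintype_card,
    Fintype.card_finset_len, Fintype.card_fin]

open Classical in
noncomputable def swapIdx (t : ℕ) (p : (Fin (t+1) → ℕ) × (Fin (t+1) → ℕ)) : ℕ :=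
  if h : ∃ m : ℕ, ∃ hm : m < t+1, p.1 ⟨m, hm⟩ < p.2 ⟨m, hm⟩ then Nat.find h else 0

open Classical in
noncomputable def swapF (t : ℕ) (p : (Fin (t+1) → ℕ) × (Fin (t+1) → ℕ)) :
    (Fin (t+2) → ℕ) × (Fin t → ℕ) :=
  (fun j => if j.val ≤ swapIdx t p then p.1 ⟨min j.val t, by omega⟩ + 1
            else p.2 ⟨j.val - 1, by omega⟩,
   fun j => if j.val < swapIdx t p then p.2 ⟨j.val, by omega⟩
            else p.1 ⟨j.val + 1, by omega⟩ + 1)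

open Classical in
noncomputable def unswapIdx (t : ℕ) (q : (Fin (t+2) → ℕ) × (Fin t → ℕ)) : ℕ :=
  Nat.find (show ∃ m : ℕ, m = t ∨ ∃ hm : m < t, q.1 ⟨m, by omega⟩ ≤ q.2 ⟨m, hm⟩ from
    ⟨t, Or.inl rfl⟩)

lemma unswapIdx_le (t : ℕ) (q : (Fin (t+2) → ℕ) × (Fin t → ℕ)) : unswapIdx t q ≤ t :=
  Nat.find_le (Or.inl rfl)

open Classical in
noncomputable def swapG (t : ℕ) (q : (Fin (t+2) → ℕ) × (Fin t → ℕ)) :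
    (Fin (t+1) → ℕ) × (Fin (t+1) → ℕ) :=
  (fun j => if h : j.val ≤ unswapIdx t q then q.1 ⟨j.val, by omega⟩ - 1
            else q.2 ⟨j.val - 1, by omega⟩ - 1,
   fun j => if h : j.val < unswapIdx t q then
              q.2 ⟨j.val, by have := unswapIdx_le t q; omega⟩
            else q.1 ⟨j.val + 1, by omega⟩)

def BadSet (n t : ℕ) : Set ((Fin (t+1) → ℕ) × (Fin (t+1) → ℕ)) :=
  {p | Monotone p.1 ∧ Monotone p.2 ∧ (∀ i, p.1 i ≤ n) ∧ (∀ i, p.2 i ≤ n) ∧ ∃ i, p.1 i < p.2 i}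

def USet (n t : ℕ) : Set (Fin (t+2) → ℕ) := {f | Monotone f ∧ ∀ i, 1 ≤ f i ∧ f i ≤ n}

def VSet (n t : ℕ) : Set (Fin t → ℕ) := {f | Monotone f ∧ ∀ i, 0 ≤ f i ∧ f i ≤ n+1}

lemma swapIdx_eq (t : ℕ) (p : (Fin (t+1) → ℕ) × (Fin (t+1) → ℕ))
    (h : ∃ m : ℕ, ∃ hm : m < t+1, p.1 ⟨m, hm⟩ < p.2 ⟨m, hm⟩) (i : ℕ) :
    swapIdx t p = i ↔ (∃ hm : i < t+1, p.1 ⟨i, hm⟩ < p.2 ⟨i, hm⟩) ∧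
      ∀ m < i, ¬ ∃ hm : m < t+1, p.1 ⟨m, hm⟩ < p.2 ⟨m, hm⟩ := by
  classical
  unfold swapIdx
  rw [dif_pos h]
  exact Nat.find_eq_iff h

lemma unswapIdx_eq (t : ℕ) (q : (Fin (t+2) → ℕ) × (Fin t → ℕ)) (i : ℕ) :
    unswapIdx t q = i ↔
      (i = t ∨ ∃ hm : i < t, q.1 ⟨i, by omega⟩ ≤ q.2 ⟨i, hm⟩) ∧
      ∀ m < i, ¬ (m = t ∨ ∃ hm : m < t, q.1 ⟨m, by omega⟩ ≤ q.2 ⟨m, hm⟩) := by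
  classical
  unfold unswapIdx
  exact Nat.find_eq_iff _

lemma swapF_mem (n t : ℕ) (p : (Fin (t+1) → ℕ) × (Fin (t+1) → ℕ)) (hp : p ∈ BadSet n t) :
    swapF t p ∈ USet n t ×ˢ VSet n t := by
  obtain ⟨hx, hy, hxn, hyn, j0, hj0⟩ := hp
  have h : ∃ m : ℕ, ∃ hm : m < t+1, p.1 ⟨m, hm⟩ < p.2 ⟨m, hm⟩ := ⟨j0.val, j0.isLt, by
    simpa using hj0⟩
  set i := swapIdx t p with hi
  obtain ⟨⟨hilt, hiviol⟩, hminraw⟩ := (swapIdx_eq t p h i).mp rfl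
  have hmin : ∀ m (hm : m < t+1), m < i → p.2 ⟨m, hm⟩ ≤ p.1 ⟨m, hm⟩ := by
    intro m hm hmi
    by_contra hc
    exact hminraw m hmi ⟨hm, by omega⟩
  constructor
  · -- USet
    constructor
    · -- Monotone u
      intro a b hab
      have hab' : a.val ≤ b.val := hab
      dsimp only [swapF]
      by_cases ha : a.val ≤ i <;> by_cases hb : b.val ≤ i
      · rw [if_pos ha, if_pos hb]
        have : p.1 ⟨min a.val t, by omega⟩ ≤ p.1 ⟨min b.val t, by omega⟩ :=
          hx (by simp [Fin.mk_le_mk]; omega)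
        omega
      · rw [if_pos ha, if_neg hb]
        have c1 : p.1 ⟨min a.val t, by omega⟩ ≤ p.1 ⟨i, hilt⟩ :=
          hx (by simp [Fin.mk_le_mk]; omega)
        have c3 : p.2 ⟨i, hilt⟩ ≤ p.2 ⟨b.val - 1, by omega⟩ :=
          hy (by simp [Fin.mk_le_mk]; omega)
        omega
      · omega
      · rw [if_neg ha, if_neg hb]
        exact hy (by simp [Fin.mk_le_mk]; omega)
    · -- bounds of u
      intro j
      dsimp only [swapF]
      by_cases hj : j.val ≤ i
      · rw [if_pos hj]
        have c1 : p.1 ⟨min j.val t, by omega⟩ ≤ p.1 ⟨i, hilt⟩ :=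
          hx (by simp [Fin.mk_le_mk]; omega)
        have c2 := hyn ⟨i, hilt⟩
        omega
      · rw [if_neg hj]
        have c1 : p.2 ⟨i, hilt⟩ ≤ p.2 ⟨j.val - 1, by omega⟩ :=
          hy (by simp [Fin.mk_le_mk]; omega)
        have c2 := hyn ⟨j.val - 1, by omega⟩
        omega
  · -- VSet
    constructor
    · intro a b hab
      have hab' : a.val ≤ b.val := hab
      dsimp only [swapF]
      by_cases ha : a.val < i <;> by_cases hb : b.val < i
      · rw [if_pos ha, if_pos hb]
        exact hy (by simp [Fin.mk_le_mk]; omega)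
      · rw [if_pos ha, if_neg hb]
        have c1 := hmin a.val (by omega) ha
        have c2 : p.1 ⟨a.val, by omega⟩ ≤ p.1 ⟨b.val + 1, by omega⟩ :=
          hx (by simp [Fin.mk_le_mk]; omega)
        omega
      · omega
      · rw [if_neg ha, if_neg hb]
        have : p.1 ⟨a.val + 1, by omega⟩ ≤ p.1 ⟨b.val + 1, by omega⟩ :=
          hx (by simp [Fin.mk_le_mk]; omega)
        omega
    · intro j
      dsimp only [swapF]
      by_cases hj : j.val < i
      · rw [if_pos hj]
        have := hyn ⟨j.val, by omega⟩
        omega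
      · rw [if_neg hj]
        have := hxn ⟨j.val + 1, by omega⟩
        omega

lemma swapG_swapF (n t : ℕ) (p : (Fin (t+1) → ℕ) × (Fin (t+1) → ℕ)) (hp : p ∈ BadSet n t) :
    swapG t (swapF t p) = p := by
  obtain ⟨hx, hy, hxn, hyn, j0, hj0⟩ := hp
  have h : ∃ m : ℕ, ∃ hm : m < t+1, p.1 ⟨m, hm⟩ < p.2 ⟨m, hm⟩ := ⟨j0.val, j0.isLt, by
    simpa using hj0⟩
  set i := swapIdx t p with hi
  obtain ⟨⟨hilt, hiviol⟩, hminraw⟩ := (swapIdx_eq t p h i).mp rfl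
  have hmin : ∀ m (hm : m < t+1), m < i → p.2 ⟨m, hm⟩ ≤ p.1 ⟨m, hm⟩ := by
    intro m hm hmi
    by_contra hc
    exact hminraw m hmi ⟨hm, by omega⟩
  have hu : unswapIdx t (swapF t p) = i := by
    rw [unswapIdx_eq]
    constructor
    · rcases Nat.lt_or_ge i t with hit | hit
      · refine Or.inr ⟨hit, ?_⟩
        dsimp only [swapF]
        rw [if_pos (by omega : i ≤ i), if_neg (by omega : ¬ i < i)]
        have : p.1 ⟨min i t, by omega⟩ ≤ p.1 ⟨i + 1, by omega⟩ :=
          hx (by simp only [Fin.mk_le_mk]; omega)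
        omega
      · exact Or.inl (by omega)
    · intro m hmi
      rintro (rfl | ⟨hmt, hc⟩)
      · omega
      · dsimp only [swapF] at hc
        rw [if_pos (by omega : m ≤ i), if_pos (by omega : m < i)] at hc
        have hle := hmin m (by omega) hmi
        have heq : (⟨min m t, by omega⟩ : Fin (t+1)) = (⟨m, by omega⟩ : Fin (t+1)) := by
          apply Fin.ext; simp; omega
        rw [heq] at hc
        omega
  apply Prod.ext
  · funext j
    dsimp only [swapG]
    by_cases hj : j.val ≤ i
    · rw [dif_pos (by omega : j.val ≤ unswapIdx t (swapF t p))]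
      dsimp only [swapF]
      rw [if_pos (by omega : j.val ≤ i)]
      have he : (⟨min j.val t, by omega⟩ : Fin (t+1)) = j := by
        apply Fin.ext; simp; omega
      rw [he]
      omega
    · rw [dif_neg (by omega : ¬ j.val ≤ unswapIdx t (swapF t p))]
      dsimp only [swapF]
      rw [if_neg (by omega : ¬ (j.val - 1 : ℕ) < i)]
      have he : (⟨j.val - 1 + 1, by omega⟩ : Fin (t+1)) = j := by
        apply Fin.ext; simp; omega
      rw [he]
      omega
  · funext j
    dsimp only [swapG]
    by_cases hj : j.val < i
    · rw [dif_pos (by omega : j.val < unswapIdx t (swapF t p))]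
      dsimp only [swapF]
      rw [if_pos (by omega : j.val < i)]
    · rw [dif_neg (by omega : ¬ j.val < unswapIdx t (swapF t p))]
      dsimp only [swapF]
      rw [if_neg (by omega : ¬ (j.val + 1 : ℕ) ≤ i)]
      have he : (⟨j.val + 1 - 1, by omega⟩ : Fin (t+1)) = j := by
        apply Fin.ext; simp
      rw [he]

lemma swapG_mem (n t : ℕ) (q : (Fin (t+2) → ℕ) × (Fin t → ℕ))
    (hq : q ∈ USet n t ×ˢ VSet n t) : swapG t q ∈ BadSet n t := by
  obtain ⟨⟨humono, hub⟩, hvmono, hvb⟩ := hq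
  set i := unswapIdx t q with hidef
  have hile : i ≤ t := unswapIdx_le t q
  obtain ⟨hq', hminraw⟩ := (unswapIdx_eq t q i).mp rfl
  have hmlt : ∀ m (hm : m < t), m < i → q.2 ⟨m, hm⟩ < q.1 ⟨m, by omega⟩ := by
    intro m hm hmi
    by_contra hc
    exact hminraw m hmi (Or.inr ⟨hm, by omega⟩)
  refine ⟨?_, ?_, ?_, ?_, ?_⟩
  · -- Monotone x
    intro a b hab
    have hab' : a.val ≤ b.val := hab
    dsimp only [swapG]
    by_cases ha : a.val ≤ i <;> by_cases hb : b.val ≤ i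
    · rw [dif_pos ha, dif_pos hb]
      have := humono (show (⟨a.val, by omega⟩ : Fin (t+2)) ≤ ⟨b.val, by omega⟩ by
        simp only [Fin.mk_le_mk]; omega)
      omega
    · rw [dif_pos ha, dif_neg hb]
      have hit : i < t := by omega
      have hui : q.1 ⟨i, by omega⟩ ≤ q.2 ⟨i, hit⟩ := by
        rcases hq' with h1 | ⟨h1, h2⟩
        · omega
        · exact h2
      have c1 := humono (show (⟨a.val, by omega⟩ : Fin (t+2)) ≤ ⟨i, by omega⟩ by
        simp only [Fin.mk_le_mk]; omega)
      have c2 := hvmono (show (⟨i, hit⟩ : Fin t) ≤ ⟨b.val - 1, by omega⟩ by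
        simp only [Fin.mk_le_mk]; omega)
      omega
    · omega
    · rw [dif_neg ha, dif_neg hb]
      have := hvmono (show (⟨a.val - 1, by omega⟩ : Fin t) ≤ ⟨b.val - 1, by omega⟩ by
        simp only [Fin.mk_le_mk]; omega)
      omega
  · -- Monotone y
    intro a b hab
    have hab' : a.val ≤ b.val := hab
    dsimp only [swapG]
    by_cases ha : a.val < i <;> by_cases hb : b.val < i
    · rw [dif_pos ha, dif_pos hb]
      exact hvmono (by simp only [Fin.mk_le_mk]; omega)
    · rw [dif_pos ha, dif_neg hb]
      have c1 := hmlt a.val (by omega) ha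
      have c2 := humono (show (⟨a.val, by omega⟩ : Fin (t+2)) ≤ ⟨b.val + 1, by omega⟩ by
        simp only [Fin.mk_le_mk]; omega)
      omega
    · omega
    · rw [dif_neg ha, dif_neg hb]
      exact humono (by simp only [Fin.mk_le_mk]; omega)
  · -- x ≤ n
    intro j
    dsimp only [swapG]
    by_cases hj : j.val ≤ i
    · rw [dif_pos hj]
      have := (hub ⟨j.val, by omega⟩).2
      omega
    · rw [dif_neg hj]
      have := (hvb ⟨j.val - 1, by omega⟩).2
      omega
  · -- y ≤ n
    intro j
    dsimp only [swapG]
    by_cases hj : j.val < i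
    · rw [dif_pos hj]
      have c1 := hmlt j.val (by omega) hj
      have c2 := (hub ⟨j.val, by omega⟩).2
      omega
    · rw [dif_neg hj]
      exact (hub ⟨j.val + 1, by omega⟩).2
  · -- violation
    refine ⟨⟨i, by omega⟩, ?_⟩
    dsimp only [swapG]
    rw [dif_pos (by simp only []; omega : (⟨i, by omega⟩ : Fin (t+1)).val ≤ i),
      dif_neg (by simp only []; omega : ¬ (⟨i, by omega⟩ : Fin (t+1)).val < i)]
    have c1 := (hub ⟨i, by omega⟩).1
    have c2 := humono (show (⟨i, by omega⟩ : Fin (t+2)) ≤ ⟨i + 1, by omega⟩ by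
      simp only [Fin.mk_le_mk]; omega)
    omega

lemma swapF_swapG (n t : ℕ) (q : (Fin (t+2) → ℕ) × (Fin t → ℕ))
    (hq : q ∈ USet n t ×ˢ VSet n t) : swapF t (swapG t q) = q := by
  obtain ⟨⟨humono, hub⟩, hvmono, hvb⟩ := hq
  set i := unswapIdx t q with hidef
  have hile : i ≤ t := unswapIdx_le t q
  obtain ⟨hq', hminraw⟩ := (unswapIdx_eq t q i).mp rfl
  have hmlt : ∀ m (hm : m < t), m < i → q.2 ⟨m, hm⟩ < q.1 ⟨m, by omega⟩ := by
    intro m hm hmi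
    by_contra hc
    exact hminraw m hmi (Or.inr ⟨hm, by omega⟩)
  have hviol : (swapG t q).1 ⟨i, by omega⟩ < (swapG t q).2 ⟨i, by omega⟩ := by
    dsimp only [swapG]
    rw [dif_pos (show i ≤ i from le_refl i), dif_neg (show ¬ i < i by omega)]
    have c1 := (hub ⟨i, by omega⟩).1
    have c2 := humono (show (⟨i, by omega⟩ : Fin (t+2)) ≤ ⟨i + 1, by omega⟩ by
      simp only [Fin.mk_le_mk]; omega)
    omega
  have hEx : ∃ m : ℕ, ∃ hm : m < t+1, (swapG t q).1 ⟨m, hm⟩ < (swapG t q).2 ⟨m, hm⟩ :=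
    ⟨i, by omega, hviol⟩
  have hsw : swapIdx t (swapG t q) = i := by
    rw [swapIdx_eq t _ hEx]
    refine ⟨⟨by omega, hviol⟩, ?_⟩
    rintro m hmi ⟨hm, hc⟩
    dsimp only [swapG] at hc
    rw [dif_pos (show m ≤ i by omega), dif_pos (show m < i from hmi)] at hc
    have c1 := hmlt m (by omega) hmi
    have c2 := (hub ⟨m, by omega⟩).1
    omega
  apply Prod.ext
  · funext j
    dsimp only [swapF]
    by_cases hj : j.val ≤ i
    · rw [if_pos (by omega : j.val ≤ swapIdx t (swapG t q))]
      dsimp only [swapG]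
      rw [dif_pos (by simp only []; omega : (⟨min j.val t, by omega⟩ : Fin (t+1)).val ≤ i)]
      have he : (⟨min j.val t, by omega⟩ : Fin (t+2)) = j := by
        apply Fin.ext; simp only []; omega
      rw [he]
      have c1 := (hub j).1
      omega
    · rw [if_neg (by omega : ¬ j.val ≤ swapIdx t (swapG t q))]
      dsimp only [swapG]
      rw [dif_neg (by simp only []; omega : ¬ (⟨j.val - 1, by omega⟩ : Fin (t+1)).val < i)]
      have he : (⟨j.val - 1 + 1, by omega⟩ : Fin (t+2)) = j := by
        apply Fin.ext; simp only []; omega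
      rw [he]
  · funext j
    dsimp only [swapF]
    by_cases hj : j.val < i
    · rw [if_pos (by omega : j.val < swapIdx t (swapG t q))]
      dsimp only [swapG]
      rw [dif_pos (by simp only []; omega : (⟨j.val, by omega⟩ : Fin (t+1)).val < i)]
    · rw [if_neg (by omega : ¬ j.val < swapIdx t (swapG t q))]
      dsimp only [swapG]
      rw [dif_neg (by simp only []; omega : ¬ (⟨j.val + 1, by omega⟩ : Fin (t+1)).val ≤ i)]
      have hit : i < t := by omega
      have hui : q.1 ⟨i, by omega⟩ ≤ q.2 ⟨i, hit⟩ := by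
        rcases hq' with h1 | ⟨h1, h2⟩
        · omega
        · exact h2
      have c1 := (hub ⟨i, by omega⟩).1
      have c2 := hvmono (show (⟨i, hit⟩ : Fin t) ≤ ⟨j.val + 1 - 1, by omega⟩ by
        simp only [Fin.mk_le_mk]; omega)
      have he : (⟨j.val + 1 - 1, by omega⟩ : Fin t) = j := by
        apply Fin.ext; simp only []; omega
      rw [he] at c2 ⊢
      omega

lemma my_ncard_prod {α β : Type*} (s : Set α) (t : Set β) :
    (s ×ˢ t).ncard = s.ncard * t.ncard := by
  rw [← Nat.card_coe_set_eq, Nat.card_congr (Equiv.Set.prod s t), Nat.card_prod,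
    Nat.card_coe_set_eq, Nat.card_coe_set_eq]

lemma my_finite_bdd {k N : ℕ} (S : Set (Fin k → ℕ)) (h : ∀ f ∈ S, ∀ i, f i ≤ N) :
    S.Finite := by
  apply Set.Finite.subset (Set.Finite.pi (fun i : Fin k => Set.finite_Icc 0 N))
  intro f hf
  simp only [Set.mem_pi, Set.mem_univ, Set.mem_Icc, forall_const]
  exact fun i => ⟨Nat.zero_le _, h f hf i⟩

open Nat in
lemma binom_identity (k s : ℕ) :
    (s + 1 + 1) * ((k + 1 + (s + 1)).choose (s + 1) * (k + 1 + (s + 1)).choose (s + 1)) =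
      (k + 1 + (s + 1)).choose (s + 1) * (k + 1 + (s + 1) + 1).choose (s + 1) +
      (s + 1 + 1) * ((k + 1 + (s + 1)).choose (s + 2) * (k + 1 + (s + 1)).choose s) := by
  have e1 : k + 1 + (s + 1) = k + s + 2 := by ring
  rw [e1]
  have h1 : s + 1 ≤ k + s + 2 := by omega
  have h2 : s + 1 ≤ k + s + 2 + 1 := by omega
  have h3 : s + 2 ≤ k + s + 2 := by omega
  have h4 : s ≤ k + s + 2 := by omega
  have := Nat.cast_choose ℚ h1
  have hcast : ∀ a b : ℕ, (a : ℚ) = b → a = b := fun a b h => Nat.cast_injective h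
  apply hcast
  push_cast
  rw [Nat.cast_choose ℚ h1, Nat.cast_choose ℚ h2, Nat.cast_choose ℚ h3, Nat.cast_choose ℚ h4]
  have r1 : k + s + 2 - (s + 1) = k + 1 := by omega
  have r2 : k + s + 2 + 1 - (s + 1) = k + 2 := by omega
  have r3 : k + s + 2 - (s + 2) = k := by omega
  have r4 : k + s + 2 - s = k + 2 := by omega
  rw [r1, r2, r3, r4]
  have f1 : (k + s + 2 + 1)! = (k + s + 2 + 1) * (k + s + 2)! := Nat.factorial_succ (k + s + 2)
  have f2 : (s + 2)! = (s + 2) * (s + 1)! := Nat.factorial_succ (s + 1)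
  have f3 : (s + 1)! = (s + 1) * s ! := Nat.factorial_succ s
  have f4 : (k + 2)! = (k + 2) * (k + 1)! := Nat.factorial_succ (k + 1)
  have f5 : (k + 1)! = (k + 1) * k ! := Nat.factorial_succ k
  rw [f1, f2, f4]
  push_cast
  rw [f3, f5]
  push_cast
  have nz : ∀ m : ℕ, ((m)! : ℚ) ≠ 0 := fun m => Nat.cast_ne_zero.mpr (Nat.factorial_ne_zero m)
  field_simp
  ring

theorem count_dominated_sequence_pairs (n r : ℕ) (hn : 1 ≤ n) :
    (r + 1) *
      {p : (Fin r → ℕ) × (Fin r → ℕ) |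
        Monotone p.1 ∧ Monotone p.2 ∧
        (∀ i, p.1 i ≤ n) ∧ (∀ i, p.2 i ≤ n) ∧
        (∀ i, p.2 i ≤ p.1 i)}.ncard =
    Nat.choose (n + r) r * Nat.choose (n + r + 1) r := by
  obtain ⟨k, rfl⟩ : ∃ k, n = k + 1 := ⟨n - 1, by omega⟩
  rcases r with _ | t
  · -- r = 0
    have hset : {p : (Fin 0 → ℕ) × (Fin 0 → ℕ) | Monotone p.1 ∧ Monotone p.2 ∧
        (∀ i, p.1 i ≤ k + 1) ∧ (∀ i, p.2 i ≤ k + 1) ∧ (∀ i, p.2 i ≤ p.1 i)} = Set.univ := by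
      ext p
      simp only [Set.mem_setOf_eq, Set.mem_univ, iff_true]
      exact ⟨fun a => a.elim0, fun a => a.elim0, fun i => i.elim0, fun i => i.elim0,
        fun i => i.elim0⟩
    rw [hset, Set.ncard_univ, Nat.card_eq_fintype_card]
    simp
  · -- r = t + 1
    set S : Set (Fin (t+1) → ℕ) := {f | Monotone f ∧ ∀ i, f i ≤ k + 1} with hSdef
    set Good := {p : (Fin (t+1) → ℕ) × (Fin (t+1) → ℕ) | Monotone p.1 ∧ Monotone p.2 ∧
        (∀ i, p.1 i ≤ k + 1) ∧ (∀ i, p.2 i ≤ k + 1) ∧ (∀ i, p.2 i ≤ p.1 i)} with hGdef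
    have hSn : S.ncard = (k + 1 + (t + 1)).choose (t + 1) := by
      have h0 := ncard_monotone_Icc (t+1) 0 (k+1) (by omega)
      have hss : {f : Fin (t+1) → ℕ | Monotone f ∧ ∀ i, 0 ≤ f i ∧ f i ≤ k + 1} = S := by
        ext f
        simp only [hSdef, Set.mem_setOf_eq, Nat.zero_le, true_and]
      rw [hss] at h0
      rw [h0]
      congr 1 <;> omega
    have hUn : (USet (k+1) t).ncard = (k + 1 + (t + 1)).choose (t + 2) := by
      have h0 := ncard_monotone_Icc (t+2) 1 (k+1) (by omega)
      rw [show {f : Fin (t+2) → ℕ | Monotone f ∧ ∀ i, 1 ≤ f i ∧ f i ≤ k + 1}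
        = USet (k+1) t from rfl] at h0
      rw [h0]
      congr 1 <;> omega
    have hVn : (VSet (k+1) t).ncard = (k + 1 + (t + 1)).choose t := by
      have h0 := ncard_monotone_Icc t 0 (k+1+1) (by omega)
      rw [show {f : Fin t → ℕ | Monotone f ∧ ∀ i, 0 ≤ f i ∧ f i ≤ k + 1 + 1}
        = VSet (k+1) t from rfl] at h0
      rw [h0]
      congr 1 <;> omega
    have hBadn : (BadSet (k+1) t).ncard
        = (k + 1 + (t + 1)).choose (t + 2) * (k + 1 + (t + 1)).choose t := by
      have hinj : Set.InjOn (swapF t) (BadSet (k+1) t) := by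
        intro p1 h1 p2 h2 he
        have h3 := swapG_swapF (k+1) t p1 h1
        rw [he, swapG_swapF (k+1) t p2 h2] at h3
        exact h3.symm
      have himg : swapF t '' BadSet (k+1) t = USet (k+1) t ×ˢ VSet (k+1) t := by
        apply Set.ext
        intro q
        constructor
        · rintro ⟨p, hp, rfl⟩
          exact swapF_mem (k+1) t p hp
        · intro hq
          exact ⟨swapG t q, swapG_mem (k+1) t q hq, swapF_swapG (k+1) t q hq⟩
      rw [← Set.ncard_image_of_injOn hinj, himg, my_ncard_prod, hUn, hVn]
    have hsplit : S ×ˢ S = Good ∪ BadSet (k+1) t := by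
      ext p
      simp only [Set.mem_prod, hSdef, hGdef, Set.mem_setOf_eq, Set.mem_union, BadSet]
      constructor
      · rintro ⟨⟨h1, h3⟩, h2, h4⟩
        by_cases hd : ∀ i, p.2 i ≤ p.1 i
        · exact Or.inl ⟨h1, h2, h3, h4, hd⟩
        · push_neg at hd
          obtain ⟨i, hi⟩ := hd
          exact Or.inr ⟨h1, h2, h3, h4, i, hi⟩
      · rintro (⟨h1, h2, h3, h4, h5⟩ | ⟨h1, h2, h3, h4, h5⟩) <;> exact ⟨⟨h1, h3⟩, h2, h4⟩
    have hSfin : S.Finite := my_finite_bdd S (fun f hf => hf.2)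
    have hSSfin : (S ×ˢ S).Finite := Set.Finite.prod hSfin hSfin
    have hGfin : Good.Finite := by
      apply hSSfin.subset
      rw [hsplit]
      exact Set.subset_union_left
    have hBfin : (BadSet (k+1) t).Finite := by
      apply hSSfin.subset
      rw [hsplit]
      exact Set.subset_union_right
    have hdisj : Disjoint Good (BadSet (k+1) t) := by
      rw [Set.disjoint_left]
      intro p hg hb
      obtain ⟨_, _, _, _, i, hi⟩ := hb
      have := hg.2.2.2.2 i
      omega
    have hsum : Good.ncard + (BadSet (k+1) t).ncard = S.ncard * S.ncard := by
      rw [← my_ncard_prod, hsplit, Set.ncard_union_eq hdisj hGfin hBfin]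
    have hb := binom_identity k t
    have key : (t + 1 + 1) * Good.ncard + (t + 1 + 1) * (BadSet (k+1) t).ncard
        = (k + 1 + (t + 1)).choose (t + 1) * (k + 1 + (t + 1) + 1).choose (t + 1)
          + (t + 1 + 1) * (BadSet (k+1) t).ncard := by
      rw [← Nat.mul_add, hsum, hSn, hBadn]
      exact hb
    exact Nat.add_right_cancel key
end

section
/- Let n and k be positive integers. Let P₁ be a lattice path from (0,0) to (k−1, n) and P₂ a lattice path from (1,−1) to (k, n−1). If P₁ and P₂ have no point in common, then for every i ∈ {1,…,n} one has 1 + min{ a : (a, i) lies on P₁ } ≤ min{ a : (a, i−1) lies on P₂ }; that is, the weakly increasing row vector corresponding to P₁ is componentwise at most the one corresponding to P₂, so the two rows stacked form a weakly increasing 2×n matrix. -/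
namespace LatticePathAux

abbrev Step (u v : ℤ × ℤ) : Prop := v = u + (1, 0) ∨ v = u + (0, 1)

abbrev Dom (u v : ℤ × ℤ) : Prop := u.1 ≤ v.1 ∧ u.2 ≤ v.2

instance : IsTrans (ℤ × ℤ) Dom :=
  ⟨fun _ _ _ h1 h2 => ⟨h1.1.trans h2.1, h1.2.trans h2.2⟩⟩

lemma pairwise_dom {p : List (ℤ × ℤ)} (hc : List.Chain' Step p) : p.Pairwise Dom := by
  have hd : List.Chain' Dom p := by
    refine hc.imp ?_
    rintro u v (rfl | rfl) <;> constructor <;> simp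
  exact List.isChain_iff_pairwise.mp hd

lemma pairwise_total {α : Type*} {R : α → α → Prop} (hrefl : ∀ a, R a a) :
    ∀ {p : List α}, p.Pairwise R → ∀ {u v : α}, u ∈ p → v ∈ p → R u v ∨ R v u := by
  intro p hp
  induction p with
  | nil => intro u v hu; cases hu
  | cons h t ih =>
    intro u v hu hv
    rcases List.pairwise_cons.mp hp with ⟨hh, ht⟩
    rcases List.mem_cons.mp hu with hu' | hu' <;> rcases List.mem_cons.mp hv with hv' | hv'
    · rw [hu', hv']; exact Or.inl (hrefl _)
    · rw [hu']; exact Or.inl (hh _ hv')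
    · rw [hv']; exact Or.inr (hh _ hu')
    · exact ih ht hu' hv'

lemma head_le {p : List (ℤ × ℤ)} {a : ℤ × ℤ} (hc : List.Chain' Step p)
    (hh : p.head? = some a) : ∀ v ∈ p, a.1 ≤ v.1 ∧ a.2 ≤ v.2 := by
  cases p with
  | nil => simp at hh
  | cons c t =>
    have hca : c = a := by simpa using hh
    intro v hv
    rcases List.mem_cons.mp hv with hv' | hv'
    · rw [hv', hca]; exact ⟨le_refl _, le_refl _⟩
    · rw [← hca]; exact (List.pairwise_cons.mp (pairwise_dom hc)).1 v hv'

lemma pred_mem : ∀ (p : List (ℤ × ℤ)), List.Chain' Step p → ∀ a : ℤ × ℤ, p.head? = some a →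
    ∀ v ∈ p, v ≠ a → ∃ u ∈ p, Step u v := by
  intro p
  induction p with
  | nil => intro _ a hh; simp at hh
  | cons c t ih =>
    intro hc a hh v hv hva
    have hca : c = a := by simpa using hh
    rcases List.mem_cons.mp hv with hv' | hv'
    · exact absurd (hv'.trans hca) hva
    cases t with
    | nil => cases hv'
    | cons d t' =>
      rcases List.isChain_cons_cons.mp hc with ⟨hcd, hc'⟩
      by_cases hvd : v = d
      · exact ⟨c, List.mem_cons_self, hvd ▸ hcd⟩
      · obtain ⟨u, hu, hs⟩ := ih hc' d rfl v hv' hvd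
        exact ⟨u, List.mem_cons_of_mem _ hu, hs⟩

/-- Step down in x at a fixed height. -/
lemma stepdown {p : List (ℤ × ℤ)} {a : ℤ × ℤ} (hc : List.Chain' Step p)
    (hh : p.head? = some a) {x x' y : ℤ} (hx : (x, y) ∈ p) (hx' : (x', y) ∈ p)
    (hlt : x < x') : (x' - 1, y) ∈ p := by
  have hne : (x', y) ≠ a := by
    intro h
    have hle := (head_le hc hh _ hx).1
    rw [← h] at hle
    simp at hle
    omega
  obtain ⟨u, hu, hs⟩ := pred_mem p hc a hh _ hx' hne
  obtain ⟨u1, u2⟩ := u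
  rcases hs with h | h <;> rw [Prod.mk_add_mk, Prod.mk.injEq] at h <;>
      obtain ⟨h1, h2⟩ := h
  · have e1 : u1 = x' - 1 := by omega
    have e2 : u2 = y := by omega
    rw [e1, e2] at hu; exact hu
  · exfalso
    rcases pairwise_total (fun a => ⟨le_refl _, le_refl _⟩) (pairwise_dom hc) hu hx with
      ⟨hA, hB⟩ | ⟨hA, hB⟩
    · simp only at hA; omega
    · simp only at hB; omega

lemma mem_interval {p : List (ℤ × ℤ)} {a : ℤ × ℤ} (hc : List.Chain' Step p)
    (hh : p.head? = some a) {x x' y : ℤ} (hx : (x, y) ∈ p) (hx' : (x', y) ∈ p) :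
    ∀ t : ℤ, x ≤ t → t ≤ x' → (t, y) ∈ p := by
  intro t htx htx'
  have hgen : ∀ d : ℕ, ∀ t : ℤ, x ≤ t → t ≤ x' → (x' - t).toNat = d → (t, y) ∈ p := by
    intro d
    induction d with
    | zero =>
      intro t h1 h2 h3
      have : t = x' := by omega
      rw [this]; exact hx'
    | succ m ihm =>
      intro t h1 h2 h3
      have ht1 : (t + 1, y) ∈ p := ihm (t + 1) (by omega) (by omega) (by omega)
      have hsd := stepdown hc hh hx ht1 (by omega : x < t + 1)
      simpa using hsd
  exact hgen _ t htx htx' rfl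

lemma heights : ∀ (p : List (ℤ × ℤ)), List.Chain' Step p → ∀ a b : ℤ × ℤ,
    p.head? = some a → p.getLast? = some b →
    ∀ y : ℤ, a.2 ≤ y → y ≤ b.2 → ∃ x, (x, y) ∈ p := by
  intro p
  induction p with
  | nil => intro _ a b hh; simp at hh
  | cons c t ih =>
    intro hc a b hh hl y hy1 hy2
    have hca : c = a := by simpa using hh
    by_cases hya : y = a.2
    · exact ⟨c.1, by rw [hya, ← hca]; simp⟩
    cases t with
    | nil =>
      have hab : c = b := by simpa using hl
      have hba : b.2 = a.2 := by rw [← hab, hca]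
      exact absurd (by omega : y = a.2) hya
    | cons d t' =>
      rcases List.isChain_cons_cons.mp hc with ⟨hcd, hc'⟩
      rw [List.getLast?_cons_cons] at hl
      have hd2 : d.2 ≤ y := by
        have hya' : a.2 < y := lt_of_le_of_ne hy1 (Ne.symm hya)
        rcases hcd with h | h <;> rw [h, ← hca] at * <;> simp [Prod.snd_add] at * <;> omega
      obtain ⟨x, hxm⟩ := ih hc' d b rfl hl y hd2 hy2
      exact ⟨x, List.mem_cons_of_mem _ hxm⟩

end LatticePathAux

open LatticePathAux in
/-- If the two lattice paths do not intersect, the row vector of `P₁` is componentwise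
at most the row vector of `P₂`. The column index `i ∈ {1, …, n}` is represented by
`i : Fin n` via `i = (i : ℕ) + 1`. -/
theorem nonintersecting_paths_give_weakly_increasing (n k : ℕ) (hn : 0 < n) (hk : 0 < k)
    (P₁ P₂ : List (ℤ × ℤ))
    (h₁ : IsLatticePath P₁ (0, 0) ((k : ℤ) - 1, (n : ℤ)))
    (h₂ : IsLatticePath P₂ (1, -1) ((k : ℤ), (n : ℤ) - 1))
    (hdisj : ∀ v, v ∈ P₁ → v ∉ P₂) :
    ∀ i : Fin n,
      1 + sInf {a : ℤ | (a, ((i : ℕ) : ℤ) + 1) ∈ P₁} ≤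
        sInf {a : ℤ | (a, ((i : ℕ) : ℤ)) ∈ P₂} := by
  obtain ⟨h1h, h1l, h1c⟩ := h₁
  obtain ⟨h2h, h2l, h2c⟩ := h₂
  have hhead1 : ((0 : ℤ), (0 : ℤ)) ∈ P₁ := by
    cases P₁ with
    | nil => simp at h1h
    | cons c t =>
      have hc0 : c = ((0 : ℤ), (0 : ℤ)) := by simpa using h1h
      simp [hc0]
  have hb₁ : ∀ y : ℤ, BddBelow {a : ℤ | (a, y) ∈ P₁} :=
    fun y => ⟨0, fun x hx => (head_le h1c h1h _ hx).1⟩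
  have hb₂ : ∀ y : ℤ, BddBelow {a : ℤ | (a, y) ∈ P₂} :=
    fun y => ⟨1, fun x hx => (head_le h2c h2h _ hx).1⟩
  have hne₁ : ∀ y : ℤ, 0 ≤ y → y ≤ (n : ℤ) → {a : ℤ | (a, y) ∈ P₁}.Nonempty :=
    fun y hy1 hy2 => heights P₁ h1c _ _ h1h h1l y hy1 hy2
  have hne₂ : ∀ y : ℤ, -1 ≤ y → y ≤ (n : ℤ) - 1 → {a : ℤ | (a, y) ∈ P₂}.Nonempty :=
    fun y hy1 hy2 => heights P₂ h2c _ _ h2h h2l y hy1 hy2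
  have key : ∀ j : ℕ, j < n →
      sInf {a : ℤ | (a, (j : ℤ) + 1) ∈ P₁} + 1 ≤ sInf {a : ℤ | (a, (j : ℤ)) ∈ P₂} := by
    intro j
    induction j with
    | zero =>
      intro hj
      by_contra hcon
      push_neg at hcon
      simp only [Nat.cast_zero] at hcon
      set m := sInf {a : ℤ | (a, (0 : ℤ) + 1) ∈ P₁} with hm_def
      set m' := sInf {a : ℤ | (a, (0 : ℤ)) ∈ P₂} with hm'_def
      have hm'le : m' ≤ m := by omega
      have hm_mem : (m, (0 : ℤ) + 1) ∈ P₁ :=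
        Int.csInf_mem (hne₁ _ (by omega) (by omega)) (hb₁ _)
      have hm'_mem : (m', (0 : ℤ)) ∈ P₂ :=
        Int.csInf_mem (hne₂ _ (by omega) (by omega)) (hb₂ _)
      have hmem0 : (m, (0 : ℤ)) ∈ P₁ := by
        have hne : (m, (0 : ℤ) + 1) ≠ ((0 : ℤ), (0 : ℤ)) := by
          simp [Prod.ext_iff]
        obtain ⟨u, hu, hs⟩ := pred_mem P₁ h1c _ h1h _ hm_mem hne
        obtain ⟨u1, u2⟩ := u
        rcases hs with h | h <;> rw [Prod.mk_add_mk, Prod.mk.injEq] at h <;>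
            obtain ⟨hA, hB⟩ := h
        · exfalso
          have hmm : u1 ∈ {a : ℤ | (a, (0 : ℤ) + 1) ∈ P₁} := by
            have e2 : u2 = (0 : ℤ) + 1 := by omega
            rw [← e2]; exact hu
          have := csInf_le (hb₁ _) hmm
          omega
        · have e1 : u1 = m := by omega
          have e2 : u2 = 0 := by omega
          rw [e1, e2] at hu; exact hu
      have hm'1 : (1 : ℤ) ≤ m' := (head_le h2c h2h _ hm'_mem).1
      have hlow : sInf {a : ℤ | (a, (0 : ℤ)) ∈ P₁} ≤ m' := by
        have h0 : (0 : ℤ) ∈ {a : ℤ | (a, (0 : ℤ)) ∈ P₁} := hhead1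
        have := csInf_le (hb₁ _) h0
        omega
      have hImem : (sInf {a : ℤ | (a, (0 : ℤ)) ∈ P₁}, (0 : ℤ)) ∈ P₁ :=
        Int.csInf_mem (hne₁ _ (by omega) (by omega)) (hb₁ _)
      have hbad : (m', (0 : ℤ)) ∈ P₁ := mem_interval h1c h1h hImem hmem0 m' hlow hm'le
      exact hdisj _ hbad hm'_mem
    | succ jj ih =>
      intro hj
      by_contra hcon
      push_neg at hcon
      set m := sInf {a : ℤ | (a, ((jj + 1 : ℕ) : ℤ) + 1) ∈ P₁} with hm_def
      set m' := sInf {a : ℤ | (a, ((jj + 1 : ℕ) : ℤ)) ∈ P₂} with hm'_def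
      have hm'le : m' ≤ m := by omega
      have hm_mem : (m, ((jj + 1 : ℕ) : ℤ) + 1) ∈ P₁ :=
        Int.csInf_mem (hne₁ _ (by positivity) (by push_cast; omega)) (hb₁ _)
      have hm'_mem : (m', ((jj + 1 : ℕ) : ℤ)) ∈ P₂ :=
        Int.csInf_mem (hne₂ _ (by push_cast; omega) (by push_cast; omega)) (hb₂ _)
      have hmem0 : (m, ((jj + 1 : ℕ) : ℤ)) ∈ P₁ := by
        have hne : (m, ((jj + 1 : ℕ) : ℤ) + 1) ≠ ((0 : ℤ), (0 : ℤ)) := by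
          simp [Prod.ext_iff]
          intro _
          push_cast
          omega
        obtain ⟨u, hu, hs⟩ := pred_mem P₁ h1c _ h1h _ hm_mem hne
        obtain ⟨u1, u2⟩ := u
        rcases hs with h | h <;> rw [Prod.mk_add_mk, Prod.mk.injEq] at h <;>
            obtain ⟨hA, hB⟩ := h
        · exfalso
          have hmm : u1 ∈ {a : ℤ | (a, ((jj + 1 : ℕ) : ℤ) + 1) ∈ P₁} := by
            have e2 : u2 = ((jj + 1 : ℕ) : ℤ) + 1 := by omega
            rw [← e2]; exact hu
          have := csInf_le (hb₁ _) hmm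
          omega
        · have e1 : u1 = m := by omega
          have e2 : u2 = ((jj + 1 : ℕ) : ℤ) := by omega
          rw [e1, e2] at hu; exact hu
      have hm'_down : (m', ((jj : ℕ) : ℤ)) ∈ P₂ := by
        have hne : (m', ((jj + 1 : ℕ) : ℤ)) ≠ ((1 : ℤ), (-1 : ℤ)) := by
          simp [Prod.ext_iff]
          intro _
          push_cast
          omega
        obtain ⟨u, hu, hs⟩ := pred_mem P₂ h2c _ h2h _ hm'_mem hne
        obtain ⟨u1, u2⟩ := u
        rcases hs with h | h <;> rw [Prod.mk_add_mk, Prod.mk.injEq] at h <;>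
            obtain ⟨hA, hB⟩ := h
        · exfalso
          have hmm : u1 ∈ {a : ℤ | (a, ((jj + 1 : ℕ) : ℤ)) ∈ P₂} := by
            have e2 : u2 = ((jj + 1 : ℕ) : ℤ) := by omega
            rw [← e2]; exact hu
          have := csInf_le (hb₂ _) hmm
          omega
        · have e1 : u1 = m' := by omega
          have e2 : u2 = ((jj : ℕ) : ℤ) := by push_cast at hB ⊢; omega
          rw [e1, e2] at hu; exact hu
      have hIH := ih (by omega)
      have hle2 : sInf {a : ℤ | (a, ((jj : ℕ) : ℤ)) ∈ P₂} ≤ m' := csInf_le (hb₂ _) hm'_down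
      have hcast : ((jj : ℕ) : ℤ) + 1 = ((jj + 1 : ℕ) : ℤ) := by push_cast; ring
      have hlow : sInf {a : ℤ | (a, ((jj + 1 : ℕ) : ℤ)) ∈ P₁} ≤ m' := by
        rw [← hcast]
        omega
      have hImem : (sInf {a : ℤ | (a, ((jj + 1 : ℕ) : ℤ)) ∈ P₁}, ((jj + 1 : ℕ) : ℤ)) ∈ P₁ :=
        Int.csInf_mem (hne₁ _ (by positivity) (by push_cast; omega)) (hb₁ _)
      have hbad : (m', ((jj + 1 : ℕ) : ℤ)) ∈ P₁ := mem_interval h1c h1h hImem hmem0 m' hlow hm'le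
      exact hdisj _ hbad hm'_mem
  intro i
  have hkey := key (i : ℕ) i.2
  omega
end

section
/- Let n and k be positive integers. Let P₁ be a lattice path from (0,0) to (k−1, n) and P₂ a lattice path from (1,−1) to (k, n−1). If P₁ and P₂ have a point in common, then there exists i ∈ {1,…,n} with 1 + min{ a : (a, i) lies on P₁ } > min{ a : (a, i−1) lies on P₂ }; that is, the 2×n matrix whose rows are the vectors corresponding to P₁ and P₂ is not weakly increasing. -/
private lemma path_pairwise {p : List (ℤ × ℤ)}
    (hc : List.Chain' (fun u v => v = u + (1, 0) ∨ v = u + (0, 1)) p) :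
    List.Pairwise (fun u v : ℤ × ℤ => u.1 ≤ v.1 ∧ u.2 ≤ v.2) p := by
  have h' : List.Chain' (fun u v : ℤ × ℤ => u.1 ≤ v.1 ∧ u.2 ≤ v.2) p := by
    refine hc.imp ?_
    rintro ⟨a, b⟩ ⟨c, d⟩ (h | h) <;> simp_all [Prod.ext_iff] <;> omega
  have : IsTrans (ℤ × ℤ) (fun u v : ℤ × ℤ => u.1 ≤ v.1 ∧ u.2 ≤ v.2) :=
    ⟨fun _ _ _ h1 h2 => ⟨h1.1.trans h2.1, h1.2.trans h2.2⟩⟩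
  exact List.isChain_iff_pairwise.mp h'

/-- Any member of the path is componentwise ≥ the head. -/
private lemma head_le_mem {p : List (ℤ × ℤ)} {a : ℤ × ℤ}
    (hc : List.Chain' (fun u v => v = u + (1, 0) ∨ v = u + (0, 1)) p)
    (hh : p.head? = some a) : ∀ u ∈ p, a.1 ≤ u.1 ∧ a.2 ≤ u.2 := by
  have hp := path_pairwise hc
  cases p with
  | nil => simp at hh
  | cons x t =>
    simp only [List.head?_cons, Option.some.injEq] at hh
    subst hh
    intro u hu
    rcases List.mem_cons.mp hu with rfl | hu
    · exact ⟨le_refl _, le_refl _⟩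
    · exact (List.pairwise_cons.mp hp).1 u hu

/-- Any member of the path is componentwise ≤ the last point. -/
private lemma mem_le_last {p : List (ℤ × ℤ)} {b : ℤ × ℤ}
    (hc : List.Chain' (fun u v => v = u + (1, 0) ∨ v = u + (0, 1)) p)
    (hl : p.getLast? = some b) : ∀ u ∈ p, u.1 ≤ b.1 ∧ u.2 ≤ b.2 := by
  have hp := path_pairwise hc
  have hp' : List.Pairwise (fun u v : ℤ × ℤ => v.1 ≤ u.1 ∧ v.2 ≤ u.2) p.reverse :=
    List.pairwise_reverse.mpr hp
  have hh : p.reverse.head? = some b := by rw [List.head?_reverse]; exact hl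
  intro u hu
  have hu' : u ∈ p.reverse := List.mem_reverse.mpr hu
  cases hrev : p.reverse with
  | nil => simp [hrev] at hu'
  | cons x t =>
    rw [hrev] at hh hp' hu'
    simp only [List.head?_cons, Option.some.injEq] at hh
    subst hh
    rcases List.mem_cons.mp hu' with rfl | hu'
    · exact ⟨le_refl _, le_refl _⟩
    · exact (List.pairwise_cons.mp hp').1 u hu'

/-- Intermediate value for heights along a lattice path. -/
private lemma exists_height :
    ∀ (p : List (ℤ × ℤ)) (a b : ℤ × ℤ),
    List.Chain' (fun u v => v = u + (1, 0) ∨ v = u + (0, 1)) p →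
    p.head? = some a → p.getLast? = some b →
    ∀ h : ℤ, a.2 ≤ h → h ≤ b.2 → ∃ x, (x, h) ∈ p
  | [], a, b => by simp
  | [u], a, b => by
    intro _ hh hl h h1 h2
    simp only [List.head?_cons, Option.some.injEq] at hh
    simp only [List.getLast?_singleton, Option.some.injEq] at hl
    refine ⟨u.1, ?_⟩
    rw [← hh] at h1; rw [← hl] at h2
    have : h = u.2 := by omega
    simp [this]
  | u :: v :: t, a, b => by
    intro hc hh hl h h1 h2
    simp only [List.head?_cons, Option.some.injEq] at hh
    rw [← hh] at h1
    rcases eq_or_lt_of_le h1 with heq | hlt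
    · exact ⟨u.1, by simp [← heq]⟩
    · have hc' := hc.tail
      have hl' : (v :: t).getLast? = some b := by
        rw [← hl]; simp [List.getLast?_cons_cons]
      have hstep := List.isChain_cons_cons.mp hc |>.1
      have hv2 : v.2 ≤ h := by
        rcases hstep with hs | hs <;> simp [hs, Prod.ext_iff] <;> omega
      obtain ⟨x, hx⟩ := exists_height (v :: t) v b hc' rfl hl' h hv2 h2
      exact ⟨x, List.mem_cons_of_mem _ hx⟩

/-- If the two lattice paths intersect, then in some column `i ∈ {1, …, n}` (represented by
`i : Fin n` via `i = (i : ℕ) + 1`) the row vector of `P₁` strictly exceeds that of `P₂`,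
i.e., the stacked `2 × n` matrix is not weakly increasing. -/
theorem intersecting_paths_give_non_weakly_increasing (n k : ℕ) (hn : 0 < n) (hk : 0 < k)
    (P₁ P₂ : List (ℤ × ℤ))
    (h₁ : IsLatticePath P₁ (0, 0) ((k : ℤ) - 1, (n : ℤ)))
    (h₂ : IsLatticePath P₂ (1, -1) ((k : ℤ), (n : ℤ) - 1))
    (hmeet : ∃ v, v ∈ P₁ ∧ v ∈ P₂) :
    ∃ i : Fin n,
      1 + sInf {a : ℤ | (a, ((i : ℕ) : ℤ) + 1) ∈ P₁} >
        sInf {a : ℤ | (a, ((i : ℕ) : ℤ)) ∈ P₂} := by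
  obtain ⟨⟨x, y⟩, hv₁, hv₂⟩ := hmeet
  obtain ⟨hh₁, hl₁, hc₁⟩ := h₁
  obtain ⟨hh₂, hl₂, hc₂⟩ := h₂
  -- bounds on y
  have hy0 : (0 : ℤ) ≤ y := (head_le_mem hc₁ hh₁ _ hv₁).2
  have hyn : y ≤ (n : ℤ) - 1 := (mem_le_last hc₂ hl₂ _ hv₂).2
  have hytn : y.toNat < n := by omega
  refine ⟨⟨y.toNat, hytn⟩, ?_⟩
  have hyc : ((y.toNat : ℕ) : ℤ) = y := by omega
  simp only [hyc]
  -- the second set: sInf ≤ x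
  have hS₂ : sInf {a : ℤ | (a, y) ∈ P₂} ≤ x := by
    apply csInf_le
    · refine ⟨1, fun a ha => ?_⟩
      exact (head_le_mem hc₂ hh₂ _ ha).1
    · exact hv₂
  -- the first set: nonempty and every element ≥ x
  have hne : ∃ a, (a, y + 1) ∈ P₁ := by
    obtain ⟨x', hx'⟩ := exists_height P₁ (0, 0) ((k : ℤ) - 1, (n : ℤ)) hc₁ hh₁ hl₁
      (y + 1) (by show (0:ℤ) ≤ y + 1; omega) (by show y + 1 ≤ (n:ℤ); omega)
    exact ⟨x', hx'⟩
  have hge : ∀ a ∈ {a : ℤ | (a, y + 1) ∈ P₁}, x ≤ a := by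
    intro a ha
    have hp := path_pairwise hc₁
    have hsym : Symmetric (fun u v : ℤ × ℤ =>
        (u.1 ≤ v.1 ∧ u.2 ≤ v.2) ∨ (v.1 ≤ u.1 ∧ v.2 ≤ u.2)) := fun u v h => h.symm
    have hp' := hp.imp (fun {u v} h => Or.inl h : ∀ {u v : ℤ × ℤ},
        (u.1 ≤ v.1 ∧ u.2 ≤ v.2) → ((u.1 ≤ v.1 ∧ u.2 ≤ v.2) ∨ (v.1 ≤ u.1 ∧ v.2 ≤ u.2)))
    have hne' : ((x, y) : ℤ × ℤ) ≠ (a, y + 1) := by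
      simp [Prod.ext_iff]
    have := by haveI : Std.Symm _ := ⟨hsym⟩; exact hp'.forall hv₁ ha hne'
    rcases this with h | h
    · exact h.1
    · exfalso; have := h.2; simp at this
  have hS₁ : x ≤ sInf {a : ℤ | (a, y + 1) ∈ P₁} := le_csInf hne hge
  omega
end
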